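/- arXiv:1302.6873 — 9 statements merged into one kernel-verified Lean document; each statement's English description precedes it below -/
import Mathlib

section
/- An element a of a ring R is quasipolar if and only if there exists an idempotent e in R such that e lies in the double commutant of a, ae is a unit in the corner ring eRe, and a(1-e) is quasinilpotent in the corner ring (1-e)R(1-e). -/
/-- `q` is quasinilpotent: `1 + q*x` is a unit for every `x` commuting with `q`. -/
def Quasinilpotent {S : Type*} [Ring S] (q : S) : Prop :=
  ∀ x : S, q * x = x * q → IsUnit (1 + q * x)

/-- `a` is quasipolar: there is an idempotent `p` in the double commutant of `a`
with `a + p` a unit and `a*p` quasinilpotent. -/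
def Quasipolar {S : Type*} [Ring S] (a : S) : Prop :=
  ∃ p : S, p * p = p ∧ (∀ y : S, y * a = a * y → p * y = y * p) ∧
    IsUnit (a + p) ∧ Quasinilpotent (a * p)

/-- `u` is a unit of the corner ring `eRe` (with identity `e`). -/
def CornerUnit {S : Type*} [Ring S] (e u : S) : Prop :=
  ∃ v : S, v = e * v * e ∧ u * v = e ∧ v * u = e

/-- `q` is quasinilpotent in the corner ring `eRe`:
`e + q*x` is a unit of `eRe` for every `x ∈ eRe` commuting with `q`. -/
def CornerQuasinilpotent {S : Type*} [Ring S] (e q : S) : Prop :=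
  ∀ x : S, x = e * x * e → q * x = x * q → CornerUnit e (e + q * x)

/-- If `c` commutes with a unit `u`, it commutes with its inverse. -/
lemma comm_of_inv {R : Type*} [Ring R] {u v c : R} (h1 : u * v = 1) (h2 : v * u = 1)
    (hc : c * u = u * c) : c * v = v * c := by
  calc c * v = (v * u) * (c * v) := by rw [h2, one_mul]
    _ = v * (u * c) * v := by noncomm_ring
    _ = v * (c * u) * v := by rw [hc]
    _ = (v * c) * (u * v) := by noncomm_ring
    _ = v * c := by rw [h1, mul_one]

lemma corner_mem {R : Type*} [Ring R] {p w : R} (hpp : p * p = p) :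
    p * w * p = p * (p * w * p) * p := by
  linear_combination (norm := noncomm_ring) -(hpp * (w * p)) - (p * p * w) * hpp

lemma corner_absorb_left {R : Type*} [Ring R] {e w : R} (hee : e * e = e)
    (hw : w = e * w * e) : e * w = w := by
  linear_combination (norm := noncomm_ring) e * hw + hee * (w * e) - hw

lemma corner_absorb_right {R : Type*} [Ring R] {e w : R} (hee : e * e = e)
    (hw : w = e * w * e) : w * e = w := by
  linear_combination (norm := noncomm_ring) hw * e + (e * w) * hee - hw

/-- An element `a` of a ring `R` is quasipolar iff there is an idempotent `e` in the
double commutant of `a` with `a*e` a unit of `eRe` and `a*(1-e)` quasinilpotent in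
`(1-e)R(1-e)`. -/
theorem quasipolar_iff_corner {R : Type*} [Ring R] (a : R) :
    Quasipolar a ↔
      ∃ e : R, e * e = e ∧ (∀ y : R, y * a = a * y → e * y = y * e) ∧
        CornerUnit e (a * e) ∧ CornerQuasinilpotent (1 - e) (a * (1 - e)) := by
  constructor
  · rintro ⟨p, hpp, hc, hu, hq⟩
    obtain ⟨v, hv1, hv2⟩ := isUnit_iff_exists.mp hu
    have hpa : p * a = a * p := hc a rfl
    have hav : a * v = v * a := comm_of_inv hv1 hv2
      (by linear_combination (norm := noncomm_ring) -hpa)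
    have hpv : p * v = v * p := hc v hav.symm
    have hep : (1 - p) * (1 - p) = 1 - p := by
      linear_combination (norm := noncomm_ring) hpp
    have hev : (1 - p) * v = v * (1 - p) := by
      linear_combination (norm := noncomm_ring) -hpv
    have hea : (1 - p) * a = a * (1 - p) := by
      linear_combination (norm := noncomm_ring) -hpa
    have hva1 : v * a = 1 - v * p := by
      linear_combination (norm := noncomm_ring) hv2
    have key : (1 - p) * (v * (1 - p)) = v * (1 - p) := by
      rw [← mul_assoc, hev, mul_assoc, hep]
    refine ⟨1 - p, hep, ?_, ?_, ?_⟩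
    · intro y hy
      linear_combination (norm := noncomm_ring) -(hc y hy)
    · refine ⟨v * (1 - p), ?_, ?_, ?_⟩
      · rw [key, mul_assoc, hep]
      · calc a * (1 - p) * (v * (1 - p)) = a * ((1 - p) * (v * (1 - p))) := by
              rw [mul_assoc]
          _ = a * (v * (1 - p)) := by rw [key]
          _ = (a * v) * (1 - p) := by rw [← mul_assoc]
          _ = (1 - v * p) * (1 - p) := by rw [hav, hva1]
          _ = 1 - p := by linear_combination (norm := noncomm_ring) v * hpp
      · calc v * (1 - p) * (a * (1 - p)) = v * a * ((1 - p) * (1 - p)) := by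
              linear_combination (norm := noncomm_ring) -(v * hpa * (1 - p))
          _ = v * a * (1 - p) := by rw [hep]
          _ = (1 - v * p) * (1 - p) := by rw [hva1]
          _ = 1 - p := by linear_combination (norm := noncomm_ring) v * hpp
    · have h1p : (1 : R) - (1 - p) = p := by rw [sub_sub_cancel]
      rw [h1p]
      intro x hx hcx
      obtain ⟨w, hw1, hw2⟩ := isUnit_iff_exists.mp (hq x hcx)
      have hxp : x * p = x := by
        linear_combination (norm := noncomm_ring) hx * p + (p * x) * hpp - hx
      have hpq : p * (a * p * x) = a * p * x := by
        linear_combination (norm := noncomm_ring) hpa * (p * x) + a * hpp * x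
      have hqp : (a * p * x) * p = a * p * x := by
        linear_combination (norm := noncomm_ring) (a * p) * hxp
      have h1 : (p + a * p * x) * p = p + a * p * x := by rw [add_mul, hpp, hqp]
      have h2 : (p + a * p * x) * w = p := by
        linear_combination (norm := noncomm_ring) p * hw1 - hpq * w
      have h3 : p * (p + a * p * x) = p + a * p * x := by rw [mul_add, hpp, hpq]
      have h4 : w * (p + a * p * x) = p := by
        linear_combination (norm := noncomm_ring) hw2 * p - w * hqp
      refine ⟨p * w * p, corner_mem hpp, ?_, ?_⟩
      · simp only [← mul_assoc]
        rw [h1, h2, hpp]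
      · rw [mul_assoc, h3, mul_assoc, h4, hpp]
  · rintro ⟨e, hee, hc, ⟨v, hv0, hv1, hv2⟩, hq⟩
    have hea : e * a = a * e := hc a rfl
    have hff : (1 - e) * (1 - e) = 1 - e := by
      linear_combination (norm := noncomm_ring) hee
    have haee : a * (1 - e) * (1 - e) = a * (1 - e) := by
      linear_combination (norm := noncomm_ring) a * hee
    have heq : e * (a * (1 - e)) = 0 := by
      linear_combination (norm := noncomm_ring) hea * (1 - e) - a * hee
    have hqe : a * (1 - e) * e = 0 := by
      linear_combination (norm := noncomm_ring) -(a * hee)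
    have hq2 : (1 - e) * (a * (1 - e)) = a * (1 - e) := by
      linear_combination (norm := noncomm_ring) -heq
    have hev' : e * v = v := corner_absorb_left hee hv0
    have hve' : v * e = v := corner_absorb_right hee hv0
    have hav : a * v = e := by rw [← hev', ← mul_assoc, hv1]
    have hva : v * a = e := by rw [← hve', mul_assoc, hea, hv2]
    refine ⟨1 - e, hff, ?_, ?_, ?_⟩
    · intro y hy
      linear_combination (norm := noncomm_ring) -(hc y hy)
    · -- IsUnit (a + (1 - e))
      have hxe : (1 : R) - e = (1 - e) * (1 - e) * (1 - e) := by
        linear_combination (norm := noncomm_ring) e * hee - 2 * hee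
      have hcomm : (a * (1 - e)) * (1 - e) = (1 - e) * (a * (1 - e)) := by
        linear_combination (norm := noncomm_ring) hea * (1 - e)
      obtain ⟨w, hw0, hw1, hw2⟩ := hq (1 - e) hxe hcomm
      rw [haee] at hw1 hw2
      have hpw : (1 - e) * w = w := corner_absorb_left hff hw0
      have hwre : w * (1 - e) = w := corner_absorb_right hff hw0
      refine isUnit_iff_exists.mpr ⟨v + w, ?_, ?_⟩
      · linear_combination (norm := noncomm_ring) hav + hw1 - hev' - a * hpw
      · linear_combination (norm := noncomm_ring) hva + hw2 - hve' - hwre * a - w * hea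
    · -- Quasinilpotent (a * (1 - e))
      intro x hcx
      have h1 : a * (1 - e) * x * e = 0 := by rw [hcx, mul_assoc, hqe, mul_zero]
      have h2 : e * (a * (1 - e) * x) = 0 := by rw [← mul_assoc, heq, zero_mul]
      have hmain : a * (1 - e) * ((1 - e) * x * (1 - e)) = a * (1 - e) * x := by
        calc a * (1 - e) * ((1 - e) * x * (1 - e))
            = (a * (1 - e) * (1 - e)) * x * (1 - e) := by noncomm_ring
          _ = a * (1 - e) * x * (1 - e) := by rw [haee]
          _ = a * (1 - e) * x := by rw [mul_sub, mul_one, h1, sub_zero]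
      have hmain2 : ((1 - e) * x * (1 - e)) * (a * (1 - e)) = a * (1 - e) * x := by
        calc ((1 - e) * x * (1 - e)) * (a * (1 - e))
            = (1 - e) * x * ((1 - e) * (a * (1 - e))) := by noncomm_ring
          _ = (1 - e) * x * (a * (1 - e)) := by rw [hq2]
          _ = (1 - e) * (x * (a * (1 - e))) := by rw [mul_assoc]
          _ = (1 - e) * (a * (1 - e) * x) := by rw [← hcx]
          _ = a * (1 - e) * x := by rw [sub_mul, one_mul, h2, sub_zero]
      obtain ⟨w, hw0, hw1, hw2⟩ := hq ((1 - e) * x * (1 - e)) (corner_mem hff)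
        (hmain.trans hmain2.symm)
      rw [hmain] at hw1 hw2
      have hpw : (1 - e) * w = w := corner_absorb_left hff hw0
      have hwre : w * (1 - e) = w := corner_absorb_right hff hw0
      refine isUnit_iff_exists.mpr ⟨e + w, ?_, ?_⟩
      · linear_combination (norm := noncomm_ring) hw1 + h1 - hpw
      · linear_combination (norm := noncomm_ring) hw2 + h2 - hwre
end

section
/- Let M be a left R-module and α ∈ E = End_R(M). If M decomposes as M = P ⊕ Q where P and Q are β-invariant for every β ∈ E commuting with α, the restriction α|_P is a unit in End(P), and α|_Q is quasinilpotent in End(Q), then α is quasipolar in E. -/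
/-!
Take for `p` the projection onto `Q` along `P`. An endomorphism commuting with `α` preserves
`P` and `Q`, hence commutes with `p`. An endomorphism preserving `P` and `Q` is a unit as soon as
its restrictions to `P` and `Q` are, and `α + p` restricts to `α|_P` and `1 + α|_Q`. If `x`
commutes with `αp`, then `1 + αpx` restricts to the identity on `P` and to `1 + α|_Q (px)|_Q` on
`Q`, where `(px)|_Q` commutes with `α|_Q`.
-/

open Submodule

theorem Quasinilpotent.isUnit_one_add {S : Type*} [Ring S] {q : S} (hq : Quasinilpotent q) :
    IsUnit (1 + q) := by
  simpa using hq 1 (by simp)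

namespace Module.End

variable {R M : Type*} [Ring R] [AddCommGroup M] [Module R M] {P Q : Submodule R M}

theorem isUnit_of_isUnit_restrict (hPQ : IsCompl P Q) {f : Module.End R M}
    (hfP : ∀ m ∈ P, f m ∈ P) (hfQ : ∀ m ∈ Q, f m ∈ Q)
    (hP : IsUnit (f.restrict hfP)) (hQ : IsUnit (f.restrict hfQ)) : IsUnit f := by
  rw [isUnit_iff] at hP hQ ⊢
  set e := prodEquivOfIsCompl P Q hPQ
  have hconj : ⇑f ∘ e = e ∘ Prod.map (f.restrict hfP) (f.restrict hfQ) := by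
    ext ⟨x, y⟩
    simp [e, coe_prodEquivOfIsCompl']
  rw [← Function.Bijective.of_comp_iff _ e.bijective, hconj]
  exact e.bijective.comp (hP.prodMap hQ)

theorem commute_projection_of_mapsTo (hPQ : IsCompl P Q) {β : Module.End R M}
    (hβP : ∀ m ∈ P, β m ∈ P) (hβQ : ∀ m ∈ Q, β m ∈ Q) :
    Commute (Q.projection P hPQ.symm) β :=
  (LinearMap.IsIdempotentElem.commute_iff (isIdempotentElem_projection _)).mpr
    ⟨by rwa [range_projection], by rwa [ker_projection]⟩

theorem isUnit_add_projection (hPQ : IsCompl P Q) {α : Module.End R M}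
    (hαP : ∀ m ∈ P, α m ∈ P) (hαQ : ∀ m ∈ Q, α m ∈ Q)
    (hP : IsUnit (α.restrict hαP)) (hQ : IsUnit (1 + α.restrict hαQ)) :
    IsUnit (α + Q.projection P hPQ.symm) := by
  have hfP : ∀ m ∈ P, (α + Q.projection P hPQ.symm) m ∈ P := fun m hm ↦ by
    simpa [projection_apply_of_mem_right hPQ.symm hm] using hαP m hm
  have hfQ : ∀ m ∈ Q, (α + Q.projection P hPQ.symm) m ∈ Q := fun m hm ↦
    Q.add_mem (hαQ m hm) (projection_apply_mem _ m)
  refine isUnit_of_isUnit_restrict hPQ hfP hfQ ?_ ?_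
  · convert hP using 1
    ext m
    simp [projection_apply_of_mem_right hPQ.symm m.2]
  · convert hQ using 1
    ext m
    simp [add_comm]

theorem quasinilpotent_mul_projection (hPQ : IsCompl P Q) {α : Module.End R M}
    (hαQ : ∀ m ∈ Q, α m ∈ Q) (hq : Quasinilpotent (α.restrict hαQ)) :
    Quasinilpotent (α * Q.projection P hPQ.symm) := by
  set p := Q.projection P hPQ.symm
  intro x hx
  have hp_mem (m : M) : p m ∈ Q := projection_apply_mem _ m
  have hpQ {m : M} (hm : m ∈ Q) : p m = m := projection_apply_of_mem_left _ hm
  have hxP {m : M} (hm : m ∈ P) : (α * p * x) m = 0 := by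
    rw [hx]
    simp [p, projection_apply_of_mem_right hPQ.symm hm]
  have hxQ {m : M} (hm : m ∈ Q) : x (α m) = α (p (x m)) := by
    simpa [hpQ hm] using (LinearMap.congr_fun hx m).symm
  set d : Module.End R Q := (p * x).restrict fun m _ ↦ hp_mem (x m)
  have hcomm : α.restrict hαQ * d = d * α.restrict hαQ := by
    ext ⟨m, hm⟩
    change α (p (x m)) = p (x (α m))
    rw [hxQ hm, hpQ (hαQ _ (hp_mem _))]
  have hfP : ∀ m ∈ P, (1 + α * p * x) m ∈ P := fun m hm ↦ by
    simpa [hxP hm] using hm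
  have hfQ : ∀ m ∈ Q, (1 + α * p * x) m ∈ Q := fun m hm ↦
    Q.add_mem hm (hαQ _ (hp_mem _))
  refine isUnit_of_isUnit_restrict hPQ hfP hfQ ?_ ?_
  · convert isUnit_one
    ext ⟨m, hm⟩
    simp [hxP hm]
  · have hrestrict : (1 + α * p * x).restrict hfQ = 1 + α.restrict hαQ * d := by
      ext
      rfl
    exact hrestrict ▸ hq d hcomm

end Module.End

/-- If `M = P ⊕ Q` with `P, Q` invariant under every endomorphism commuting with `α`,
`α|_P` a unit of `End(P)` and `α|_Q` quasinilpotent in `End(Q)`, then `α` is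
quasipolar in `End(M)`. -/
theorem quasipolar_of_decomposition {R M : Type*} [Ring R] [AddCommGroup M] [Module R M]
    (α : Module.End R M) (P Q : Submodule R M) (hPQ : IsCompl P Q)
    (hinv : ∀ β : Module.End R M, β * α = α * β →
      (∀ m ∈ P, β m ∈ P) ∧ (∀ m ∈ Q, β m ∈ Q))
    (hP : ∀ m ∈ P, α m ∈ P) (hQ : ∀ m ∈ Q, α m ∈ Q)
    (hu : IsUnit (LinearMap.restrict α hP : Module.End R P))
    (hq : Quasinilpotent (LinearMap.restrict α hQ : Module.End R Q)) :
    Quasipolar α :=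
  ⟨Q.projection P hPQ.symm, (isIdempotentElem_projection _).eq,
    fun β hβ ↦ (Module.End.commute_projection_of_mapsTo hPQ (hinv β hβ).1 (hinv β hβ).2).eq,
    Module.End.isUnit_add_projection hPQ hP hQ hu hq.isUnit_one_add,
    Module.End.quasinilpotent_mul_projection hPQ hQ hq⟩
end

section
/- Let M be a left R-module and α ∈ E = End_R(M). If α is quasipolar in E, then M = P ⊕ Q where P and Q are β-invariant for every β ∈ E commuting with α, α|_P is a unit in End(P), and α|_Q is quasinilpotent in End(Q). -/
lemma isUnit_restrict_aux {R M : Type*} [Ring R] [AddCommGroup M] [Module R M]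
    (u : Module.End R M) (hu : IsUnit u) (N : Submodule R M)
    (h1 : ∀ m ∈ N, u m ∈ N)
    (h2 : ∀ m ∈ N, (↑hu.unit⁻¹ : Module.End R M) m ∈ N) :
    IsUnit (LinearMap.restrict u h1) := by
  have e1 : u * (↑hu.unit⁻¹ : Module.End R M) = 1 := hu.mul_val_inv
  have e2 : (↑hu.unit⁻¹ : Module.End R M) * u = 1 := hu.val_inv_mul
  refine ⟨⟨LinearMap.restrict u h1,
    LinearMap.restrict (↑hu.unit⁻¹ : Module.End R M) h2, ?_, ?_⟩, rfl⟩
  · ext m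
    have h := congrArg (fun f : Module.End R M => f (m : M)) e1
    simp only [Module.End.mul_apply, Module.End.one_apply] at h
    simpa [LinearMap.restrict_apply] using h
  · ext m
    have h := congrArg (fun f : Module.End R M => f (m : M)) e2
    simp only [Module.End.mul_apply, Module.End.one_apply] at h
    simpa [LinearMap.restrict_apply] using h

/-- If `α` is quasipolar in `End(M)`, then `M = P ⊕ Q` with `P, Q` invariant under every
endomorphism commuting with `α`, `α|_P` a unit of `End(P)` and `α|_Q` quasinilpotent in
`End(Q)`. -/
theorem decomposition_of_quasipolar {R M : Type*} [Ring R] [AddCommGroup M] [Module R M]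
    (α : Module.End R M) (h : Quasipolar α) :
    ∃ P Q : Submodule R M, IsCompl P Q ∧
      (∀ β : Module.End R M, β * α = α * β →
        (∀ m ∈ P, β m ∈ P) ∧ (∀ m ∈ Q, β m ∈ Q)) ∧
      ∃ (hP : ∀ m ∈ P, α m ∈ P) (hQ : ∀ m ∈ Q, α m ∈ Q),
        IsUnit (LinearMap.restrict α hP : Module.End R P) ∧
        Quasinilpotent (LinearMap.restrict α hQ : Module.End R Q) := by
  obtain ⟨p, hp1, hp2, hu, hqn⟩ := h
  have hpp : ∀ m : M, p (p m) = p m := fun m =>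
    congrArg (fun f : Module.End R M => f m) hp1
  have hpα : p * α = α * p := hp2 α rfl
  set P := LinearMap.ker p with hPdef
  set Q := LinearMap.range p with hQdef
  have hmemQ : ∀ m : M, m ∈ Q ↔ p m = m := by
    intro m
    constructor
    · rintro ⟨n, rfl⟩; exact hpp n
    · intro hm; exact ⟨m, hm⟩
  -- invariance under anything commuting with p
  have hinv : ∀ β : Module.End R M, p * β = β * p →
      (∀ m ∈ P, β m ∈ P) ∧ (∀ m ∈ Q, β m ∈ Q) := by
    intro β hβ
    have hβ' : ∀ m : M, p (β m) = β (p m) := fun m =>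
      congrArg (fun f : Module.End R M => f m) hβ
    constructor
    · intro m hm
      have hm' : p m = 0 := hm
      simp only [hPdef, LinearMap.mem_ker, hβ', hm', map_zero]
    · intro m hm
      rw [hmemQ] at hm ⊢
      rw [hβ', hm]
  have hcompl : IsCompl P Q := by
    constructor
    · rw [disjoint_iff]
      ext m
      simp only [Submodule.mem_inf, Submodule.mem_bot, LinearMap.mem_ker, hmemQ]
      constructor
      · rintro ⟨h0, h1⟩; rw [← h1, h0]
      · rintro rfl; simp
    · rw [codisjoint_iff, eq_top_iff]
      intro m _
      have : m = (m - p m) + p m := by abel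
      rw [this]
      refine Submodule.add_mem_sup ?_ ⟨m, rfl⟩
      show p (m - p m) = 0
      simp [map_sub, hpp]
  have hP : ∀ m ∈ P, α m ∈ P := (hinv α hpα).1
  have hQ : ∀ m ∈ Q, α m ∈ Q := (hinv α hpα).2
  refine ⟨P, Q, hcompl, fun β hβ => hinv β (hp2 β hβ), hP, hQ, ?_, ?_⟩
  · -- α restricted to P = ker p is a unit : it agrees with α + p there
    have hcomm : p * (α + p) = (α + p) * p := by
      rw [mul_add, add_mul, hpα]
    have hc : Commute p (↑hu.unit : Module.End R M) := by
      rw [hu.unit_spec]; exact hcomm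
    have hcinv : Commute p (↑hu.unit⁻¹ : Module.End R M) := hc.units_inv_right
    have h1 : ∀ m ∈ P, (α + p) m ∈ P := (hinv (α + p) hcomm).1
    have h2 : ∀ m ∈ P, (↑hu.unit⁻¹ : Module.End R M) m ∈ P :=
      (hinv _ hcinv.eq).1
    have hrestrict : LinearMap.restrict α hP = LinearMap.restrict (α + p) h1 := by
      ext m
      have hm : p (m : M) = 0 := m.2
      simp [LinearMap.restrict_apply, hm]
    rw [hrestrict]
    exact isUnit_restrict_aux (α + p) hu P h1 h2
  · -- quasinilpotent part on Q = range p
    intro γ hγ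
    -- extend γ to an endomorphism of M
    set x : Module.End R M := Q.subtype ∘ₗ γ ∘ₗ p.rangeRestrict with hxdef
    have hxapply : ∀ m : M, x m = (γ ⟨p m, ⟨m, rfl⟩⟩ : M) := fun m => rfl
    have hγ' : ∀ q : Q, γ (LinearMap.restrict α hQ q) = LinearMap.restrict α hQ (γ q) := by
      intro q
      have := congrArg (fun f : Module.End R Q => f q) hγ
      simpa [Module.End.mul_apply] using this.symm
    have hγcoe : ∀ q : Q, (γ ⟨α (q : M), hQ q q.2⟩ : M) = α (γ q : M) := by
      intro q
      have := congrArg (Subtype.val) (hγ' q)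
      simpa [LinearMap.restrict_apply] using this
    have hQmem : ∀ q : Q, p ((q : M)) = (q : M) := fun q => (hmemQ _).1 q.2
    have hxcomm : (α * p) * x = x * (α * p) := by
      ext m
      simp only [Module.End.mul_apply, hxapply]
      have h1 : p ((γ ⟨p m, ⟨m, rfl⟩⟩ : Q) : M) = ((γ ⟨p m, ⟨m, rfl⟩⟩ : Q) : M) :=
        hQmem _
      rw [h1]
      have h2 : p (α (p m)) = α (p m) := (hmemQ _).1 (hQ _ ⟨m, rfl⟩)
      have h3 : (⟨p (α (p m)), ⟨α (p m), rfl⟩⟩ : Q) = ⟨α (p m), hQ _ ⟨m, rfl⟩⟩ :=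
        Subtype.ext h2
      rw [h3]
      have h4 : (⟨α (p m), hQ _ ⟨m, rfl⟩⟩ : Q) = ⟨α ((⟨p m, ⟨m, rfl⟩⟩ : Q) : M), hQ _ (⟨p m, ⟨m, rfl⟩⟩ : Q).2⟩ := rfl
      rw [h4, hγcoe]
    have hu2 : IsUnit (1 + (α * p) * x) := hqn x hxcomm
    set u : Module.End R M := 1 + (α * p) * x with hudef
    -- u commutes with p
    have hxp : x * p = x := by
      ext m
      simp only [Module.End.mul_apply, hxapply]
      exact congrArg (fun q : _ => ((γ q : _) : M)) (Subtype.ext (hpp m))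
    have hpx : p * x = x := by
      ext m
      simp only [Module.End.mul_apply, hxapply]
      exact hQmem _
    have hup : p * u = u * p := by
      rw [hudef, mul_add, add_mul, mul_one, one_mul]
      have e1 : p * (α * p * x) = α * p * x := by
        rw [← mul_assoc, ← mul_assoc, hpα, mul_assoc α p p, hp1]
      have e2 : (α * p * x) * p = α * p * x := by rw [mul_assoc, hxp]
      rw [e1, e2]
    have hcu : Commute p (↑hu2.unit : Module.End R M) := by
      rw [hu2.unit_spec]; exact hup
    have h1 : ∀ m ∈ Q, u m ∈ Q := (hinv u hup).2
    have h2 : ∀ m ∈ Q, (↑hu2.unit⁻¹ : Module.End R M) m ∈ Q :=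
      (hinv _ hcu.units_inv_right.eq).2
    have hru : IsUnit (LinearMap.restrict u h1) := isUnit_restrict_aux u hu2 Q h1 h2
    have : 1 + LinearMap.restrict α hQ * γ = LinearMap.restrict u h1 := by
      ext q
      simp only [LinearMap.add_apply, Module.End.mul_apply, Module.End.one_apply,
        LinearMap.restrict_apply, hudef]
      simp only [Submodule.coe_add]
      congr 1
      rw [hxapply]
      have e1 : (⟨p (q : M), ⟨(q : M), rfl⟩⟩ : Q) = q := Subtype.ext (hQmem q)
      rw [e1, hQmem (γ q)]
    rw [this]
    exact hru
end

section
/- Let R be a local ring. The Jacobson radical of the ring 𝒯₃(R) consists exactly of those matrices [[a₁₁,0,0],[a₂₁,a₂₂,a₂₃],[0,0,a₃₃]] with a₁₁, a₂₂, a₃₃ ∈ J(R) and a₂₁, a₂₃ ∈ R arbitrary. -/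
/-- The subring of `M₃(R)` of matrices with entries only in positions
(1,1), (2,1), (2,2), (2,3), (3,3). -/
def T3 (R : Type*) [Ring R] : Subring (Matrix (Fin 3) (Fin 3) R) where
  carrier := {A | A 0 1 = 0 ∧ A 0 2 = 0 ∧ A 2 0 = 0 ∧ A 2 1 = 0}
  zero_mem' := by simp
  one_mem' := by simp [Matrix.one_apply]
  add_mem' := by rintro A B ⟨h1,h2,h3,h4⟩ ⟨g1,g2,g3,g4⟩; simp_all
  neg_mem' := by rintro A ⟨h1,h2,h3,h4⟩; simp_all
  mul_mem' := by
    rintro A B ⟨h1,h2,h3,h4⟩ ⟨g1,g2,g3,g4⟩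
    refine ⟨?_,?_,?_,?_⟩ <;>
      simp [Matrix.mul_apply, Fin.sum_univ_three, h1,h2,h3,h4,g1,g2,g3,g4]

private lemma T3aux1 {R : Type*} [Ring R] (w z u v : R) (h : z * u * v + z - 1 = 0) :
    -(w * z * (u * v)) + w + -(w * z) = 0 := by
  have e : -(w * (z * u * v + z - 1)) = 0 := by rw [h]; simp
  rw [← e]; noncomm_ring

private lemma T3aux2 {R : Type*} [Ring R] (w z u v : R) (h : z * u * v + z - 1 = 0) :
    w + -(w * z * (u * v)) + -(w * z) = 0 := by
  have e : -(w * (z * u * v + z - 1)) = 0 := by rw [h]; simp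
  rw [← e]; noncomm_ring

/-- Over a local ring, the Jacobson radical of `𝒯₃(R)` consists exactly of the matrices
whose diagonal entries lie in `J(R)` (the off-diagonal entries being arbitrary). -/
theorem T3_mem_jacobson_iff {R : Type*} [Ring R] [IsLocalRing R] (A : T3 R) :
    A ∈ (⊥ : Ideal (T3 R)).jacobson ↔
      (A : Matrix (Fin 3) (Fin 3) R) 0 0 ∈ (⊥ : Ideal R).jacobson ∧
        (A : Matrix (Fin 3) (Fin 3) R) 1 1 ∈ (⊥ : Ideal R).jacobson ∧
        (A : Matrix (Fin 3) (Fin 3) R) 2 2 ∈ (⊥ : Ideal R).jacobson := by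
  obtain ⟨pA1, pA2, pA3, pA4⟩ := A.prop
  constructor
  · intro hA
    refine ⟨?_, ?_, ?_⟩ <;> rw [Ideal.mem_jacobson_iff] <;> intro y
    · obtain ⟨Z, hZ⟩ := Ideal.mem_jacobson_iff.mp hA
        ⟨!![y,0,0;0,0,0;0,0,0], by refine ⟨?_,?_,?_,?_⟩ <;> rfl⟩
      rw [Ideal.mem_bot] at hZ
      have h := congrArg (fun M : T3 R => (M : Matrix (Fin 3) (Fin 3) R) 0 0) hZ
      simp [Matrix.mul_apply, Fin.sum_univ_three, Z.prop.1, Z.prop.2.1] at h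
      exact ⟨(Z : Matrix (Fin 3) (Fin 3) R) 0 0, by rw [Ideal.mem_bot]; exact h⟩
    · obtain ⟨Z, hZ⟩ := Ideal.mem_jacobson_iff.mp hA
        ⟨!![0,0,0;0,y,0;0,0,0], by refine ⟨?_,?_,?_,?_⟩ <;> rfl⟩
      rw [Ideal.mem_bot] at hZ
      have h := congrArg (fun M : T3 R => (M : Matrix (Fin 3) (Fin 3) R) 1 1) hZ
      simp [Matrix.mul_apply, Fin.sum_univ_three, pA1, pA4] at h
      exact ⟨(Z : Matrix (Fin 3) (Fin 3) R) 1 1, by rw [Ideal.mem_bot]; exact h⟩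
    · obtain ⟨Z, hZ⟩ := Ideal.mem_jacobson_iff.mp hA
        ⟨!![0,0,0;0,0,0;0,0,y], by refine ⟨?_,?_,?_,?_⟩ <;> rfl⟩
      rw [Ideal.mem_bot] at hZ
      have h := congrArg (fun M : T3 R => (M : Matrix (Fin 3) (Fin 3) R) 2 2) hZ
      simp [Matrix.mul_apply, Fin.sum_univ_three, Z.prop.2.2.1, Z.prop.2.2.2] at h
      exact ⟨(Z : Matrix (Fin 3) (Fin 3) R) 2 2, by rw [Ideal.mem_bot]; exact h⟩
  · rintro ⟨h0, h1, h2⟩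
    rw [Ideal.mem_jacobson_iff]
    rintro ⟨Y, pY1, pY2, pY3, pY4⟩
    obtain ⟨z0, hz0⟩ := Ideal.mem_jacobson_iff.mp h0 (Y 0 0)
    obtain ⟨z1, hz1⟩ := Ideal.mem_jacobson_iff.mp h1 (Y 1 1)
    obtain ⟨z2, hz2⟩ := Ideal.mem_jacobson_iff.mp h2 (Y 2 2)
    rw [Ideal.mem_bot] at hz0 hz1 hz2
    refine ⟨⟨!![z0,0,0;
        -(z1 * (Y 1 0 * (A : Matrix (Fin 3) (Fin 3) R) 0 0
            + Y 1 1 * (A : Matrix (Fin 3) (Fin 3) R) 1 0) * z0), z1,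
        -(z1 * (Y 1 1 * (A : Matrix (Fin 3) (Fin 3) R) 1 2
            + Y 1 2 * (A : Matrix (Fin 3) (Fin 3) R) 2 2) * z2);
        0,0,z2], by refine ⟨?_,?_,?_,?_⟩ <;> rfl⟩, ?_⟩
    rw [Ideal.mem_bot]
    apply Subtype.ext
    ext i j
    fin_cases i <;> fin_cases j <;>
      simp [Matrix.mul_apply, Fin.sum_univ_three, Matrix.one_apply, Matrix.vecMul,
        Matrix.vecHead, Matrix.vecTail, dotProduct,
        pA1, pA2, pA3, pA4, pY1, pY2, pY3, pY4] <;>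
      first
        | (rw [← mul_assoc]; assumption)
        | exact T3aux1 _ _ _ _ hz0
        | exact T3aux2 _ _ _ _ hz2
end

section
/- If R is a uniquely bleached local ring, then the ring 𝒯₃(R) of 3×3 matrices with entries only in positions (1,1), (2,1), (2,2), (2,3), (3,3) is quasipolar. -/
/-- `R` is bleached: for every `a` in the Jacobson radical and unit `b`,
the maps `x ↦ b*x - x*a` and `x ↦ a*x - x*b` are surjective. -/
def Bleached (R : Type*) [Ring R] : Prop :=
  ∀ a b : R, a ∈ (⊥ : Ideal R).jacobson → IsUnit b →
    Function.Surjective (fun x : R => b * x - x * a) ∧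
      Function.Surjective (fun x : R => a * x - x * b)

/-- `R` is uniquely bleached: for every `a` in the Jacobson radical and unit `b`,
the maps `x ↦ b*x - x*a` and `x ↦ a*x - x*b` are bijective. -/
def UniquelyBleached (R : Type*) [Ring R] : Prop :=
  ∀ a b : R, a ∈ (⊥ : Ideal R).jacobson → IsUnit b →
    Function.Bijective (fun x : R => b * x - x * a) ∧
      Function.Bijective (fun x : R => a * x - x * b)

set_option linter.unusedSectionVars false

section T3Lemmas
variable {R : Type*} [Ring R]

private def t3 (a b c d e : R) : T3 R :=
  ⟨Matrix.of ![![a,0,0], ![b,c,d], ![0,0,e]], ⟨rfl, rfl, rfl, rfl⟩⟩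

private lemma t3_mul (a b c d e a' b' c' d' e' : R) :
    t3 a b c d e * t3 a' b' c' d' e' =
      t3 (a*a') (b*a' + c*b') (c*c') (c*d' + d*e') (e*e') := by
  apply Subtype.ext
  show (t3 a b c d e).1 * (t3 a' b' c' d' e').1 = _
  ext i j
  fin_cases i <;> fin_cases j <;>
    simp [t3, Matrix.mul_apply, Fin.sum_univ_three, Matrix.vecHead, Matrix.vecTail]

private lemma t3_add (a b c d e a' b' c' d' e' : R) :
    t3 a b c d e + t3 a' b' c' d' e' = t3 (a+a') (b+b') (c+c') (d+d') (e+e') := by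
  apply Subtype.ext
  show (t3 a b c d e).1 + (t3 a' b' c' d' e').1 = _
  ext i j
  fin_cases i <;> fin_cases j <;> simp [t3, Matrix.vecHead, Matrix.vecTail]

private lemma t3_one : (1 : T3 R) = t3 1 0 1 0 1 := by
  apply Subtype.ext
  show (1 : Matrix (Fin 3) (Fin 3) R) = _
  ext i j
  fin_cases i <;> fin_cases j <;> simp [t3, Matrix.one_apply, Matrix.vecHead, Matrix.vecTail]

private lemma t3_surj (A : T3 R) : ∃ a b c d e : R, A = t3 a b c d e := by
  obtain ⟨A, h1, h2, h3, h4⟩ := A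
  refine ⟨A 0 0, A 1 0, A 1 1, A 1 2, A 2 2, ?_⟩
  apply Subtype.ext
  show A = _
  ext i j
  fin_cases i <;> fin_cases j <;> simp [t3, Matrix.vecHead, Matrix.vecTail, h1, h2, h3, h4]

private lemma t3_inj {a b c d e a' b' c' d' e' : R}
    (h : t3 a b c d e = t3 a' b' c' d' e') :
    a = a' ∧ b = b' ∧ c = c' ∧ d = d' ∧ e = e' := by
  refine ⟨?_, ?_, ?_, ?_, ?_⟩
  · simpa [t3] using congrArg (fun M : T3 R => M.1 0 0) h
  · simpa [t3] using congrArg (fun M : T3 R => M.1 1 0) h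
  · simpa [t3] using congrArg (fun M : T3 R => M.1 1 1) h
  · simpa [t3] using congrArg (fun M : T3 R => M.1 1 2) h
  · simpa [t3] using congrArg (fun M : T3 R => M.1 2 2) h

private lemma t3_congr {a b c d e a' b' c' d' e' : R} (h1 : a = a') (h2 : b = b')
    (h3 : c = c') (h4 : d = d') (h5 : e = e') :
    t3 a b c d e = t3 a' b' c' d' e' := by rw [h1, h2, h3, h4, h5]

private lemma t3_isUnit {a b c d e : R} (ha : IsUnit a) (hc : IsUnit c) (he : IsUnit e) :
    IsUnit (t3 a b c d e) := by
  set a' := Ring.inverse a with ha'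
  set c' := Ring.inverse c with hc'
  set e' := Ring.inverse e with he'
  have haa : a * a' = 1 := Ring.mul_inverse_cancel a ha
  have ha'a : a' * a = 1 := Ring.inverse_mul_cancel a ha
  have hcc : c * c' = 1 := Ring.mul_inverse_cancel c hc
  have hc'c : c' * c = 1 := Ring.inverse_mul_cancel c hc
  have hee : e * e' = 1 := Ring.mul_inverse_cancel e he
  have he'e : e' * e = 1 := Ring.inverse_mul_cancel e he
  refine isUnit_iff_exists.mpr ⟨t3 a' (-(c' * (b * a'))) c' (-(c' * (d * e'))) e', ?_, ?_⟩
  · rw [t3_mul, t3_one]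
    refine t3_congr haa ?_ hcc ?_ hee
    · rw [mul_neg, ← mul_assoc, hcc, one_mul, add_neg_cancel]
    · rw [mul_neg, ← mul_assoc, hcc, one_mul, neg_add_cancel]
  · rw [t3_mul, t3_one]
    refine t3_congr ha'a ?_ hc'c ?_ he'e
    · rw [neg_mul, mul_assoc, mul_assoc, ha'a, mul_one, neg_add_cancel]
    · rw [neg_mul, mul_assoc, mul_assoc, he'e, mul_one, add_neg_cancel]

end T3Lemmas

section LocalFacts
variable {R : Type*} [Ring R] [IsLocalRing R]


lemma lr_unit_or (a : R) : IsUnit a ∨ IsUnit (1 - a) :=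
  IsLocalRing.isUnit_or_isUnit_of_add_one (by abel)

lemma lr_unit_idem {e : R} (he : IsUnit e) (h : e * e = e) : e = 1 := by
  obtain ⟨u, rfl⟩ := he
  have := congrArg (fun x => (↑u⁻¹ : R) * x) h
  simpa [← mul_assoc] using this

lemma lr_mul_eq_one_comm {a b : R} (h : a * b = 1) : b * a = 1 := by
  rcases lr_unit_or (b * a) with he | he
  · exact lr_unit_idem he (by rw [mul_assoc, ← mul_assoc a b, h, one_mul])
  · exfalso
    have h0 : (1 - b * a) * b = 0 := by
      rw [sub_mul, one_mul, mul_assoc, h, mul_one, sub_self]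
    obtain ⟨u, hu⟩ := he
    have hb : b = 0 := by
      calc b = ↑u⁻¹ * (↑u * b) := by rw [← mul_assoc, u.inv_mul, one_mul]
        _ = ↑u⁻¹ * ((1 - b * a) * b) := by rw [hu]
        _ = 0 := by rw [h0, mul_zero]
    have : (0 : R) = 1 := by rw [← h, hb, mul_zero]
    exact one_ne_zero this.symm

lemma lr_isUnit_of_mul_left {x a : R} (h : IsUnit (x * a)) : IsUnit a := by
  obtain ⟨u, hu⟩ := h
  have h1 : (↑u⁻¹ * x) * a = 1 := by rw [mul_assoc, ← hu, u.inv_mul]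
  exact isUnit_iff_exists.mpr ⟨_, lr_mul_eq_one_comm h1, h1⟩

lemma lr_isUnit_of_mul_right {a x : R} (h : IsUnit (a * x)) : IsUnit a := by
  obtain ⟨u, hu⟩ := h
  have h1 : a * (x * ↑u⁻¹) = 1 := by rw [← mul_assoc, ← hu, u.mul_inv]
  exact isUnit_iff_exists.mpr ⟨_, h1, lr_mul_eq_one_comm h1⟩

lemma lr_isUnit_one_add {a : R} (ha : ¬IsUnit a) : IsUnit (1 + a) := by
  rcases lr_unit_or (-a) with h | h
  · exact absurd (by simpa using h.neg) ha
  · simpa [sub_neg_eq_add] using h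

lemma lr_mem_jacobson_bot {a : R} (ha : ¬IsUnit a) : a ∈ (⊥ : Ideal R).jacobson := by
  rw [Ideal.mem_jacobson_iff]
  intro y
  have h1 : ¬IsUnit (y * a) := fun hu => ha (lr_isUnit_of_mul_left hu)
  obtain ⟨u, hu⟩ := lr_isUnit_one_add h1
  refine ⟨↑u⁻¹, ?_⟩
  rw [Ideal.mem_bot]
  have h2 : (↑u⁻¹ : R) * (1 + y * a) = 1 := by rw [← hu, u.inv_mul]
  calc (↑u⁻¹ : R) * y * a + ↑u⁻¹ - 1 = ↑u⁻¹ * (1 + y * a) - 1 := by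
        rw [mul_add, mul_one, mul_assoc, add_comm]
    _ = 0 := by rw [h2, sub_self]

open Classical in
noncomputable def pd (a : R) : R := if IsUnit a then 0 else 1

lemma pd_of_unit {a : R} (ha : IsUnit a) : pd a = 0 := if_pos ha
lemma pd_of_nonunit {a : R} (ha : ¬IsUnit a) : pd a = 1 := if_neg ha

lemma corner1 (h : UniquelyBleached R) (a c b : R) :
    ∃ q : R, q * pd a + pd c * q = q ∧
      (∀ y1 y2 u : R, y1 * a = a * y1 → y2 * c = c * y2 →
        u * a + y2 * b = b * y1 + c * u → q * y1 + pd c * u = u * pd a + y2 * q) := by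
  by_cases ha : IsUnit a <;> by_cases hc : IsUnit c
  · refine ⟨0, by simp [pd_of_unit ha, pd_of_unit hc], ?_⟩
    intro y1 y2 u _ _ _
    simp [pd_of_unit ha, pd_of_unit hc]
  · -- a unit, c nonunit : q solves c*q - q*a = b
    obtain ⟨finj, fsurj⟩ := (h c a (lr_mem_jacobson_bot hc) ha).2
    obtain ⟨q, hq⟩ := fsurj b
    have hq' : c * q - q * a = b := hq
    refine ⟨q, by simp [pd_of_unit ha, pd_of_nonunit hc], ?_⟩
    intro y1 y2 u hy1 hy2 hu
    rw [pd_of_unit ha, pd_of_nonunit hc, one_mul, mul_zero, zero_add]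
    have key : c * u - u * a = y2 * b - b * y1 := by
      rw [sub_eq_sub_iff_add_eq_add]
      calc c * u + b * y1 = b * y1 + c * u := add_comm _ _
        _ = u * a + y2 * b := hu.symm
        _ = y2 * b + u * a := add_comm _ _
    have key2 : c * (y2 * q - q * y1) - (y2 * q - q * y1) * a = y2 * b - b * y1 := by
      calc c * (y2 * q - q * y1) - (y2 * q - q * y1) * a
          = (c * y2) * q - c * (q * y1) - (y2 * q) * a + q * (y1 * a) := by noncomm_ring
        _ = (y2 * c) * q - c * (q * y1) - (y2 * q) * a + q * (a * y1) := by rw [← hy2, hy1]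
        _ = y2 * (c * q - q * a) - (c * q - q * a) * y1 := by noncomm_ring
        _ = y2 * b - b * y1 := by rw [hq']
    have hueq : u = y2 * q - q * y1 :=
      finj (show c * u - u * a = c * (y2 * q - q * y1) - (y2 * q - q * y1) * a by
        rw [key, key2])
    rw [hueq]; abel
  · -- a nonunit, c unit : q solves c*q - q*a = -b
    obtain ⟨finj, fsurj⟩ := (h a c (lr_mem_jacobson_bot ha) hc).1
    obtain ⟨q, hq⟩ := fsurj (-b)
    have hq' : c * q - q * a = -b := hq
    refine ⟨q, by simp [pd_of_nonunit ha, pd_of_unit hc], ?_⟩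
    intro y1 y2 u hy1 hy2 hu
    rw [pd_of_nonunit ha, pd_of_unit hc, zero_mul, add_zero, mul_one]
    have key : c * u - u * a = y2 * b - b * y1 := by
      rw [sub_eq_sub_iff_add_eq_add]
      calc c * u + b * y1 = b * y1 + c * u := add_comm _ _
        _ = u * a + y2 * b := hu.symm
        _ = y2 * b + u * a := add_comm _ _
    have key2 : c * (q * y1 - y2 * q) - (q * y1 - y2 * q) * a = y2 * b - b * y1 := by
      calc c * (q * y1 - y2 * q) - (q * y1 - y2 * q) * a
          = c * (q * y1) - (c * y2) * q - (q * y1) * a + (y2 * q) * a := by noncomm_ring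
        _ = c * (q * y1) - (y2 * c) * q - q * (y1 * a) + (y2 * q) * a := by
            rw [← hy2, mul_assoc q y1 a]
        _ = c * (q * y1) - (y2 * c) * q - q * (a * y1) + (y2 * q) * a := by rw [hy1]
        _ = (c * q - q * a) * y1 - y2 * (c * q - q * a) := by noncomm_ring
        _ = (-b) * y1 - y2 * (-b) := by rw [hq']
        _ = y2 * b - b * y1 := by noncomm_ring
    have hueq : u = q * y1 - y2 * q :=
      finj (show c * u - u * a = c * (q * y1 - y2 * q) - (q * y1 - y2 * q) * a by
        rw [key, key2])
    rw [hueq]; abel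
  · refine ⟨0, by simp [pd_of_nonunit ha, pd_of_nonunit hc], ?_⟩
    intro y1 y2 u _ _ _
    simp [pd_of_nonunit ha, pd_of_nonunit hc]

lemma corner2 (h : UniquelyBleached R) (c e d : R) :
    ∃ r : R, pd c * r + r * pd e = r ∧
      (∀ y2 y3 v : R, y2 * c = c * y2 → y3 * e = e * y3 →
        y2 * d + v * e = c * v + d * y3 → pd c * v + r * y3 = y2 * r + v * pd e) := by
  by_cases hc : IsUnit c <;> by_cases he : IsUnit e
  · refine ⟨0, by simp [pd_of_unit hc, pd_of_unit he], ?_⟩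
    intro y2 y3 v _ _ _
    simp [pd_of_unit hc, pd_of_unit he]
  · -- c unit, e nonunit : r solves c*r - r*e = -d
    obtain ⟨finj, fsurj⟩ := (h e c (lr_mem_jacobson_bot he) hc).1
    obtain ⟨r, hr⟩ := fsurj (-d)
    have hr' : c * r - r * e = -d := hr
    refine ⟨r, by simp [pd_of_unit hc, pd_of_nonunit he], ?_⟩
    intro y2 y3 v hy2 hy3 hv
    rw [pd_of_unit hc, pd_of_nonunit he, zero_mul, zero_add, mul_one]
    have key : c * v - v * e = y2 * d - d * y3 := by
      rw [sub_eq_sub_iff_add_eq_add]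
      calc c * v + d * y3 = y2 * d + v * e := hv.symm
        _ = y2 * d + v * e := rfl
    have key2 : c * (r * y3 - y2 * r) - (r * y3 - y2 * r) * e = y2 * d - d * y3 := by
      calc c * (r * y3 - y2 * r) - (r * y3 - y2 * r) * e
          = c * (r * y3) - (c * y2) * r - (r * y3) * e + (y2 * r) * e := by noncomm_ring
        _ = c * (r * y3) - (y2 * c) * r - r * (y3 * e) + (y2 * r) * e := by
            rw [← hy2, mul_assoc r y3 e]
        _ = c * (r * y3) - (y2 * c) * r - r * (e * y3) + (y2 * r) * e := by rw [hy3]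
        _ = (c * r - r * e) * y3 - y2 * (c * r - r * e) := by noncomm_ring
        _ = (-d) * y3 - y2 * (-d) := by rw [hr']
        _ = y2 * d - d * y3 := by noncomm_ring
    have hveq : v = r * y3 - y2 * r :=
      finj (show c * v - v * e = c * (r * y3 - y2 * r) - (r * y3 - y2 * r) * e by
        rw [key, key2])
    rw [hveq]; abel
  · -- c nonunit, e unit : r solves c*r - r*e = d
    obtain ⟨finj, fsurj⟩ := (h c e (lr_mem_jacobson_bot hc) he).2
    obtain ⟨r, hr⟩ := fsurj d
    have hr' : c * r - r * e = d := hr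
    refine ⟨r, by simp [pd_of_nonunit hc, pd_of_unit he], ?_⟩
    intro y2 y3 v hy2 hy3 hv
    rw [pd_of_nonunit hc, pd_of_unit he, one_mul, mul_zero, add_zero]
    have key : c * v - v * e = y2 * d - d * y3 := by
      rw [sub_eq_sub_iff_add_eq_add]
      exact hv.symm
    have key2 : c * (y2 * r - r * y3) - (y2 * r - r * y3) * e = y2 * d - d * y3 := by
      calc c * (y2 * r - r * y3) - (y2 * r - r * y3) * e
          = (c * y2) * r - c * (r * y3) - (y2 * r) * e + r * (y3 * e) := by noncomm_ring
        _ = (y2 * c) * r - c * (r * y3) - (y2 * r) * e + r * (e * y3) := by rw [← hy2, hy3]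
        _ = y2 * (c * r - r * e) - (c * r - r * e) * y3 := by noncomm_ring
        _ = y2 * d - d * y3 := by rw [hr']
    have hveq : v = y2 * r - r * y3 :=
      finj (show c * v - v * e = c * (y2 * r - r * y3) - (y2 * r - r * y3) * e by
        rw [key, key2])
    rw [hveq]; abel
  · refine ⟨0, by simp [pd_of_nonunit hc, pd_of_nonunit he], ?_⟩
    intro y2 y3 v _ _ _
    simp [pd_of_nonunit hc, pd_of_nonunit he]

private lemma pd_idem (a : R) : pd a * pd a = pd a := by
  unfold pd; split <;> simp

private lemma pd_comm (a y : R) : pd a * y = y * pd a := by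
  unfold pd; split <;> simp

private lemma pd_add_unit (a : R) : IsUnit (a + pd a) := by
  unfold pd; split
  · simpa
  · rw [add_comm]; exact lr_isUnit_one_add (by assumption)

private lemma pd_diag_unit (a x : R) : IsUnit (1 + a * pd a * x) := by
  unfold pd; split
  · simp
  · rw [mul_one]
    exact lr_isUnit_one_add (fun hu => (by assumption : ¬IsUnit a) (lr_isUnit_of_mul_right hu))

end LocalFacts


/-- If `R` is a uniquely bleached local ring, then `𝒯₃(R)` is quasipolar. -/
theorem T3_quasipolar_of_uniquelyBleached {R : Type*} [Ring R] [IsLocalRing R]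
    (h : UniquelyBleached R) : ∀ A : T3 R, Quasipolar A := by
  intro A
  obtain ⟨a, b, c, d, e, rfl⟩ := t3_surj A
  obtain ⟨q, hqidem, hqcomm⟩ := corner1 h a c b
  obtain ⟨r, hridem, hrcomm⟩ := corner2 h c e d
  refine ⟨t3 (pd a) q (pd c) r (pd e), ?_, ?_, ?_, ?_⟩
  · rw [t3_mul]
    exact t3_congr (pd_idem a) hqidem (pd_idem c) hridem (pd_idem e)
  · intro y hy
    obtain ⟨y1, u, y2, v, y3, rfl⟩ := t3_surj y
    rw [t3_mul, t3_mul] at hy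
    obtain ⟨h1, h2, h3, h4, h5⟩ := t3_inj hy
    rw [t3_mul, t3_mul]
    exact t3_congr (pd_comm a y1) (hqcomm y1 y2 u h1 h3 h2) (pd_comm c y2)
      (hrcomm y2 y3 v h3 h5 h4) (pd_comm e y3)
  · rw [t3_add]
    exact t3_isUnit (pd_add_unit a) (pd_add_unit c) (pd_add_unit e)
  · intro x _
    obtain ⟨x1, w, x2, z, x3, rfl⟩ := t3_surj x
    rw [t3_mul, t3_mul, t3_one, t3_add]
    exact t3_isUnit (by simpa using pd_diag_unit a x1) (by simpa using pd_diag_unit c x2)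
      (by simpa using pd_diag_unit e x3)
end

section
/- Let R be a local ring. Then the ring 𝒯₃(R) (3×3 matrices with nonzero entries only in positions (1,1), (2,1), (2,2), (2,3), (3,3)) is strongly rad clean if and only if R is bleached. -/
/-- `x` lies in the Jacobson radical of the corner ring `eSe` (with identity `e`):
for every `y ∈ eSe`, `e - y*x` is a unit of `eSe`. -/
def MemCornerJacobson {S : Type*} [Ring S] (e x : S) : Prop :=
  ∀ y : S, y = e * y * e →
    ∃ z : S, z = e * z * e ∧ (e - y * x) * z = e ∧ z * (e - y * x) = e

/-- `a` is strongly rad clean: there is an idempotent `e` commuting with `a` such that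
`a - e` is a unit and `e*a ∈ J(eSe)`. -/
def StronglyRadCleanElem {S : Type*} [Ring S] (a : S) : Prop :=
  ∃ e : S, e * e = e ∧ a * e = e * a ∧ IsUnit (a - e) ∧ MemCornerJacobson e (e * a)

namespace T3Aux

variable {R : Type*} [Ring R]

def E3 (a x b y c : R) : Matrix (Fin 3) (Fin 3) R := !![a,0,0; x,b,y; 0,0,c]

@[simp] lemma E3_00 (a x b y c : R) : E3 a x b y c 0 0 = a := rfl
@[simp] lemma E3_10 (a x b y c : R) : E3 a x b y c 1 0 = x := rfl
@[simp] lemma E3_11 (a x b y c : R) : E3 a x b y c 1 1 = b := rfl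
@[simp] lemma E3_12 (a x b y c : R) : E3 a x b y c 1 2 = y := rfl
@[simp] lemma E3_22 (a x b y c : R) : E3 a x b y c 2 2 = c := rfl

lemma E3_mem (a x b y c : R) : E3 a x b y c ∈ T3 R := by
  refine ⟨?_,?_,?_,?_⟩ <;> simp [E3]

lemma eq_E3 {A : Matrix (Fin 3) (Fin 3) R} (h : A ∈ T3 R) :
    A = E3 (A 0 0) (A 1 0) (A 1 1) (A 1 2) (A 2 2) := by
  obtain ⟨h1,h2,h3,h4⟩ := h
  ext i j
  fin_cases i <;> fin_cases j <;> simp [E3, h1, h2, h3, h4]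

lemma E3_mul (a x b y c a' x' b' y' c' : R) :
    E3 a x b y c * E3 a' x' b' y' c' =
      E3 (a*a') (x*a' + b*x') (b*b') (b*y' + y*c') (c*c') := by
  ext i j
  fin_cases i <;> fin_cases j <;>
    simp [E3, Matrix.mul_apply, Fin.sum_univ_three]

lemma E3_congr {a x b y c a' x' b' y' c' : R} (h1 : a = a') (h2 : x = x')
    (h3 : b = b') (h4 : y = y') (h5 : c = c') :
    E3 a x b y c = E3 a' x' b' y' c' := by subst h1 h2 h3 h4 h5; rfl

lemma E3_one : (1 : Matrix (Fin 3) (Fin 3) R) = E3 1 0 1 0 1 := by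
  ext i j; fin_cases i <;> fin_cases j <;> simp [E3, Matrix.one_apply, Matrix.vecHead, Matrix.vecTail]

lemma mul_diag {A B : Matrix (Fin 3) (Fin 3) R} (hA : A ∈ T3 R) (hB : B ∈ T3 R)
    (i : Fin 3) : (A * B) i i = A i i * B i i := by
  obtain ⟨a1,a2,a3,a4⟩ := hA; obtain ⟨b1,b2,b3,b4⟩ := hB
  fin_cases i <;>
    simp [Matrix.mul_apply, Fin.sum_univ_three, a1, a2, a3, a4, b1, b2, b3, b4]

end T3Aux

namespace T3Aux

variable {R : Type*} [Ring R]

/-- An element of `T3 R` whose diagonal entries are units is a unit. -/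
lemma isUnit_of_diag {M : T3 R} (h0 : IsUnit ((M : Matrix (Fin 3) (Fin 3) R) 0 0))
    (h1 : IsUnit ((M : Matrix (Fin 3) (Fin 3) R) 1 1))
    (h2 : IsUnit ((M : Matrix (Fin 3) (Fin 3) R) 2 2)) : IsUnit M := by
  obtain ⟨u, hu⟩ := h0; obtain ⟨v, hv⟩ := h1; obtain ⟨w, hw⟩ := h2
  set x : R := (M : Matrix (Fin 3) (Fin 3) R) 1 0 with hx
  set y : R := (M : Matrix (Fin 3) (Fin 3) R) 1 2 with hy
  have hM : (M : Matrix (Fin 3) (Fin 3) R)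
      = E3 (↑u) x (↑v) y (↑w) := by rw [hu, hv, hw]; exact eq_E3 M.2
  refine isUnit_iff_exists.2 ⟨⟨E3 ↑u⁻¹ (-(↑v⁻¹ * x * ↑u⁻¹)) ↑v⁻¹ (-(↑v⁻¹ * y * ↑w⁻¹)) ↑w⁻¹,
    E3_mem _ _ _ _ _⟩, ?_, ?_⟩ <;>
  · refine Subtype.ext ?_
    show _ * _ = (1 : Matrix (Fin 3) (Fin 3) R)
    rw [hM, E3_mul, E3_one]
    refine E3_congr (by simp) ?_ (by simp) ?_ (by simp) <;>
      simp [mul_assoc, ← mul_assoc (↑v : R), ← mul_assoc (↑u : R), ← mul_assoc (↑w : R)]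

lemma diag_isUnit {M : T3 R} (h : IsUnit M) :
    IsUnit ((M : Matrix (Fin 3) (Fin 3) R) 0 0) ∧
    IsUnit ((M : Matrix (Fin 3) (Fin 3) R) 1 1) ∧
    IsUnit ((M : Matrix (Fin 3) (Fin 3) R) 2 2) := by
  obtain ⟨N, hN1, hN2⟩ := isUnit_iff_exists.1 h
  have hv1 : (M : Matrix (Fin 3) (Fin 3) R) * N = 1 := congrArg Subtype.val hN1
  have hv2 : (N : Matrix (Fin 3) (Fin 3) R) * M = 1 := congrArg Subtype.val hN2
  have key : ∀ i : Fin 3, IsUnit ((M : Matrix (Fin 3) (Fin 3) R) i i) := fun i =>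
    isUnit_iff_exists.2 ⟨(N : Matrix (Fin 3) (Fin 3) R) i i,
      by rw [← mul_diag M.2 N.2, hv1]; simp [Matrix.one_apply],
      by rw [← mul_diag N.2 M.2, hv2]; simp [Matrix.one_apply]⟩
  exact ⟨key 0, key 1, key 2⟩

end T3Aux

namespace T3Aux

variable {R : Type*} [Ring R]

/-- An abstract "corner-relative" unit criterion. -/
lemma corner_inv {S : Type*} [Ring S] {e w : S} (he : e * e = e)
    (h1 : e * w = w) (h2 : w * e = w) (hu : IsUnit (w + 1 - e)) :
    ∃ z : S, z = e * z * e ∧ w * z = e ∧ z * w = e := by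
  obtain ⟨v, hv⟩ := hu
  have hve : (↑v : S) * e = w := by
    rw [hv, sub_mul, add_mul, one_mul, he, h2, add_sub_cancel_right]
  have hev : e * (↑v : S) = w := by
    rw [hv, mul_sub, mul_add, mul_one, he, h1, add_sub_cancel_right]
  have hcomm : (↑v⁻¹ : S) * e = e * ↑v⁻¹ := by
    calc (↑v⁻¹ : S) * e = ↑v⁻¹ * e * (↑v * ↑v⁻¹) := by rw [v.mul_inv, mul_one]
      _ = ↑v⁻¹ * (e * ↑v) * ↑v⁻¹ := by noncomm_ring
      _ = ↑v⁻¹ * (↑v * e) * ↑v⁻¹ := by rw [hev, hve]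
      _ = (↑v⁻¹ * ↑v) * (e * ↑v⁻¹) := by noncomm_ring
      _ = e * ↑v⁻¹ := by rw [v.inv_mul, one_mul]
  refine ⟨e * ↑v⁻¹, ?_, ?_, ?_⟩
  · have : e * (e * ↑v⁻¹) * e = e * ↑v⁻¹ := by
      rw [← mul_assoc, he, mul_assoc, hcomm, ← mul_assoc, he]
    exact this.symm
  · rw [← mul_assoc, h2, ← hev, mul_assoc, v.mul_inv, mul_one]
  · rw [← hve, ← mul_assoc, mul_assoc e (↑v⁻¹ : S) (↑v : S), v.inv_mul, mul_one, he]

variable [IsLocalRing R]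

lemma isUnit_one_sub_of_not_isUnit {a : R} (h : ¬IsUnit a) : IsUnit (1 - a) :=
  (IsLocalRing.isUnit_or_isUnit_of_add_one (add_sub_cancel a 1)).resolve_left h

lemma idem01 {e : R} (h : e * e = e) : e = 0 ∨ e = 1 := by
  by_cases hu : IsUnit e
  · right
    obtain ⟨u, hu⟩ := hu
    have h2 : e * e * ↑u⁻¹ = e * ↑u⁻¹ := by rw [h]
    have h3 : e * ↑u⁻¹ = 1 := by rw [← hu, u.mul_inv]
    rw [mul_assoc, h3, mul_one] at h2
    exact h2
  · left
    obtain ⟨u, hu⟩ := isUnit_one_sub_of_not_isUnit hu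
    have h2 : (1 - e) * e = 0 := by rw [sub_mul, one_mul, h, sub_self]
    have h3 : ↑u⁻¹ * ((1 - e) * e) = 0 := by rw [h2, mul_zero]
    rwa [← hu, ← mul_assoc, u.inv_mul, one_mul] at h3

/-- In a local ring, a left-invertible element is a unit. -/
lemma isUnit_of_left_inv {a b : R} (h : b * a = 1) : IsUnit a := by
  have hid : (a * b) * (a * b) = a * b := by
    rw [mul_assoc, ← mul_assoc b, h, one_mul]
  rcases idem01 hid with h0 | h1
  · exfalso
    have : a = 0 := by
      have h2 : (a * b) * a = 0 := by rw [h0, zero_mul]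
      rwa [mul_assoc, h, mul_one] at h2
    rw [this, mul_zero] at h
    exact one_ne_zero h.symm
  · exact isUnit_iff_exists.2 ⟨b, h1, h⟩

lemma isUnit_one_sub_mul {a : R} (y : R) (h : ¬IsUnit a) : IsUnit (1 - y * a) := by
  refine isUnit_one_sub_of_not_isUnit fun hya => h ?_
  obtain ⟨u, hu⟩ := hya
  exact isUnit_of_left_inv (a := a) (b := ↑u⁻¹ * y)
    (by rw [mul_assoc, ← hu, u.inv_mul])

lemma isUnit_sub_one {a : R} (h : ¬IsUnit a) : IsUnit (a - 1) := by
  simpa using (isUnit_one_sub_of_not_isUnit h).neg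

lemma mem_jac_iff {a : R} : a ∈ (⊥ : Ideal R).jacobson ↔ ¬IsUnit a := by
  rw [Ideal.jacobson, Submodule.mem_sInf]
  constructor
  · intro hmem hu
    obtain ⟨M, hM, hle⟩ := Ideal.exists_le_maximal (⊥ : Ideal R) bot_ne_top
    exact hM.ne_top (Ideal.eq_top_of_isUnit_mem M (hmem M ⟨hle, hM⟩) hu)
  · intro ha J hJ
    by_contra haJ
    have htop : J ⊔ Ideal.span {a} = ⊤ := by
      refine hJ.2.1.2 _ (lt_of_le_of_ne le_sup_left fun hEq => haJ ?_)
      exact hEq ▸ Submodule.mem_sup_right (Ideal.subset_span rfl)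
    have h1 : (1 : R) ∈ J ⊔ Ideal.span {a} := htop ▸ Submodule.mem_top
    obtain ⟨m, hm, z, hz, hmz⟩ := Submodule.mem_sup.1 h1
    obtain ⟨r, hr⟩ := Ideal.mem_span_singleton'.1 hz
    rcases IsLocalRing.isUnit_or_isUnit_of_add_one hmz with hum | huz
    · exact hJ.2.1.1 (Ideal.eq_top_of_isUnit_mem J hm hum)
    · rw [← hr] at huz
      obtain ⟨u, hu⟩ := huz
      exact ha (isUnit_of_left_inv (a := a) (b := ↑u⁻¹ * r)
        (by rw [mul_assoc, ← hu, u.inv_mul]))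

end T3Aux

namespace T3Aux

variable {R : Type*} [Ring R]

lemma coe_sub (M N : T3 R) :
    ((M - N : T3 R) : Matrix (Fin 3) (Fin 3) R) = (M : Matrix (Fin 3) (Fin 3) R) - N := rfl

lemma coe_mul (M N : T3 R) :
    ((M * N : T3 R) : Matrix (Fin 3) (Fin 3) R) = (M : Matrix (Fin 3) (Fin 3) R) * N := rfl

lemma coe_one : ((1 : T3 R) : Matrix (Fin 3) (Fin 3) R) = 1 := rfl

variable [IsLocalRing R]

lemma key (hbl : Bleached R) (a b x : R) :
    ∃ e1 e2 s : R,
      ((e1 = 0 ∧ IsUnit a) ∨ (e1 = 1 ∧ ¬IsUnit a)) ∧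
      ((e2 = 0 ∧ IsUnit b) ∨ (e2 = 1 ∧ ¬IsUnit b)) ∧
      x * e1 + b * s = s * a + e2 * x ∧ s * e1 + e2 * s = s := by
  by_cases ha : IsUnit a <;> by_cases hb : IsUnit b
  · exact ⟨0, 0, 0, Or.inl ⟨rfl, ha⟩, Or.inl ⟨rfl, hb⟩, by simp, by simp⟩
  · obtain ⟨s, hs⟩ := (hbl b a (mem_jac_iff.2 hb) ha).2 x
    simp only at hs
    refine ⟨0, 1, s, Or.inl ⟨rfl, ha⟩, Or.inr ⟨rfl, hb⟩, ?_, by simp⟩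
    simp only [mul_zero, zero_add, one_mul]
    rw [sub_eq_iff_eq_add.1 hs]; abel
  · obtain ⟨s, hs⟩ := (hbl a b (mem_jac_iff.2 ha) hb).1 (-x)
    simp only at hs
    refine ⟨1, 0, s, Or.inr ⟨rfl, ha⟩, Or.inl ⟨rfl, hb⟩, ?_, by simp⟩
    simp only [mul_one, zero_mul, add_zero]
    rw [sub_eq_iff_eq_add.1 hs]; abel
  · exact ⟨1, 1, 0, Or.inr ⟨rfl, ha⟩, Or.inr ⟨rfl, hb⟩, by simp, by simp⟩

lemma backward (hbl : Bleached R) (A : T3 R) : StronglyRadCleanElem A := by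
  obtain ⟨e1, e2, s, h1, h2, hcs, hids⟩ :=
    key hbl ((A : Matrix (Fin 3) (Fin 3) R) 0 0) ((A : Matrix (Fin 3) (Fin 3) R) 1 1)
      ((A : Matrix (Fin 3) (Fin 3) R) 1 0)
  obtain ⟨e3, e2', t, h3, h2', hct, hidt⟩ :=
    key hbl ((A : Matrix (Fin 3) (Fin 3) R) 2 2) ((A : Matrix (Fin 3) (Fin 3) R) 1 1)
      ((A : Matrix (Fin 3) (Fin 3) R) 1 2)
  have he2 : e2' = e2 := by
    rcases h2 with ⟨h,hu⟩|⟨h,hu⟩ <;> rcases h2' with ⟨h',hu'⟩|⟨h',hu'⟩ <;> simp_all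
  rw [he2] at hct hidt
  have hv1 : e1 = 0 ∨ e1 = 1 := h1.imp And.left And.left
  have hv2 : e2 = 0 ∨ e2 = 1 := h2.imp And.left And.left
  have hv3 : e3 = 0 ∨ e3 = 1 := h3.imp And.left And.left
  set a := (A : Matrix (Fin 3) (Fin 3) R) 0 0 with hadef
  set x := (A : Matrix (Fin 3) (Fin 3) R) 1 0 with hxdef
  set b := (A : Matrix (Fin 3) (Fin 3) R) 1 1 with hbdef
  set y := (A : Matrix (Fin 3) (Fin 3) R) 1 2 with hydef
  set c := (A : Matrix (Fin 3) (Fin 3) R) 2 2 with hcdef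
  have hA : (A : Matrix (Fin 3) (Fin 3) R) = E3 a x b y c := eq_E3 A.2
  refine ⟨⟨E3 e1 s e2 t e3, E3_mem _ _ _ _ _⟩, ?_, ?_, ?_, ?_⟩
  · -- idempotent
    refine Subtype.ext ?_
    rw [coe_mul]
    show E3 e1 s e2 t e3 * E3 e1 s e2 t e3 = E3 e1 s e2 t e3
    rw [E3_mul]
    refine E3_congr ?_ hids ?_ ?_ ?_
    · rcases hv1 with rfl | rfl <;> simp
    · rcases hv2 with rfl | rfl <;> simp
    · rw [add_comm]; exact hidt
    · rcases hv3 with rfl | rfl <;> simp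
  · -- commutes
    refine Subtype.ext ?_
    rw [coe_mul, coe_mul]
    show (A : Matrix (Fin 3) (Fin 3) R) * E3 e1 s e2 t e3
        = E3 e1 s e2 t e3 * (A : Matrix (Fin 3) (Fin 3) R)
    rw [hA, E3_mul, E3_mul]
    refine E3_congr ?_ hcs ?_ ?_ ?_
    · rcases hv1 with rfl | rfl <;> simp
    · rcases hv2 with rfl | rfl <;> simp
    · rw [add_comm (b*t) (y*e3), hct, add_comm]
    · rcases hv3 with rfl | rfl <;> simp
  · -- A - E is a unit
    apply isUnit_of_diag <;> rw [coe_sub, Matrix.sub_apply]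
    · show IsUnit (a - _)
      rcases h1 with ⟨rfl, hu⟩ | ⟨rfl, hu⟩
      · simpa using hu
      · exact isUnit_sub_one hu
    · show IsUnit (b - _)
      rcases h2 with ⟨rfl, hu⟩ | ⟨rfl, hu⟩
      · simpa using hu
      · exact isUnit_sub_one hu
    · show IsUnit (c - _)
      rcases h3 with ⟨rfl, hu⟩ | ⟨rfl, hu⟩
      · simpa using hu
      · exact isUnit_sub_one hu
  · -- corner Jacobson condition
    set E : T3 R := ⟨E3 e1 s e2 t e3, E3_mem _ _ _ _ _⟩ with hEdef
    intro Y hY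
    have hEE : E * E = E := by
      refine Subtype.ext ?_
      rw [coe_mul]
      show E3 e1 s e2 t e3 * E3 e1 s e2 t e3 = E3 e1 s e2 t e3
      rw [E3_mul]
      refine E3_congr ?_ hids ?_ ?_ ?_
      · rcases hv1 with rfl | rfl <;> simp
      · rcases hv2 with rfl | rfl <;> simp
      · rw [add_comm]; exact hidt
      · rcases hv3 with rfl | rfl <;> simp
    have hAE : A * E = E * A := by
      refine Subtype.ext ?_
      rw [coe_mul, coe_mul]
      show (A : Matrix (Fin 3) (Fin 3) R) * E3 e1 s e2 t e3
          = E3 e1 s e2 t e3 * (A : Matrix (Fin 3) (Fin 3) R)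
      rw [hA, E3_mul, E3_mul]
      refine E3_congr ?_ hcs ?_ ?_ ?_
      · rcases hv1 with rfl | rfl <;> simp
      · rcases hv2 with rfl | rfl <;> simp
      · rw [add_comm (b*t) (y*e3), hct, add_comm]
      · rcases hv3 with rfl | rfl <;> simp
    have hEY : E * Y = Y := by
      rw [hY, show E*(E*Y*E) = (E*E)*Y*E from by noncomm_ring, hEE]
    have hw1 : E * (E - Y * (E * A)) = E - Y * (E * A) := by
      rw [mul_sub, hEE, ← mul_assoc, hEY]
    have hw2 : (E - Y * (E * A)) * E = E - Y * (E * A) := by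
      have hx : (E * A) * E = E * A := by rw [mul_assoc, hAE, ← mul_assoc, hEE]
      rw [sub_mul, hEE, mul_assoc, hx]
    have hu : IsUnit ((E - Y * (E * A)) + 1 - E) := by
      have heq : (E - Y * (E * A)) + 1 - E = 1 - Y * (E * A) := by abel
      rw [heq]
      apply isUnit_of_diag <;>
        rw [coe_sub, Matrix.sub_apply, coe_one, Matrix.one_apply_eq, coe_mul, coe_mul,
          mul_diag Y.2 (Subring.mul_mem _ E.2 A.2), mul_diag E.2 A.2]
      · show IsUnit (1 - _ * (e1 * a))
        rcases h1 with ⟨rfl, hu⟩ | ⟨rfl, hu⟩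
        · simp
        · rw [one_mul]; exact isUnit_one_sub_mul _ hu
      · show IsUnit (1 - _ * (e2 * b))
        rcases h2 with ⟨rfl, hu⟩ | ⟨rfl, hu⟩
        · simp
        · rw [one_mul]; exact isUnit_one_sub_mul _ hu
      · show IsUnit (1 - _ * (e3 * c))
        rcases h3 with ⟨rfl, hu⟩ | ⟨rfl, hu⟩
        · simp
        · rw [one_mul]; exact isUnit_one_sub_mul _ hu
    exact corner_inv hEE hw1 hw2 hu

end T3Aux

namespace T3Aux

variable {R : Type*} [Ring R] [IsLocalRing R]

lemma forward (h : ∀ A : T3 R, StronglyRadCleanElem A) : Bleached R := by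
  intro a b ha hb
  have hna : ¬IsUnit a := mem_jac_iff.1 ha
  constructor
  · -- surjectivity of fun x => b*x - x*a
    intro w
    obtain ⟨E, hEE, hcomm, hunit, hcorner⟩ := h ⟨E3 a w b 0 1, E3_mem _ _ _ _ _⟩
    have hEval : (E : Matrix (Fin 3) (Fin 3) R)
        = E3 ((E : Matrix (Fin 3) (Fin 3) R) 0 0) ((E : Matrix (Fin 3) (Fin 3) R) 1 0)
            ((E : Matrix (Fin 3) (Fin 3) R) 1 1) ((E : Matrix (Fin 3) (Fin 3) R) 1 2)
            ((E : Matrix (Fin 3) (Fin 3) R) 2 2) := eq_E3 E.2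
    set e1 := (E : Matrix (Fin 3) (Fin 3) R) 0 0 with he1def
    set s := (E : Matrix (Fin 3) (Fin 3) R) 1 0 with hsdef
    set e2 := (E : Matrix (Fin 3) (Fin 3) R) 1 1 with he2def
    have hmul : (E : Matrix (Fin 3) (Fin 3) R) * E = E :=
      (coe_mul E E) ▸ congrArg Subtype.val hEE
    have hid1 : e1 * e1 = e1 := by
      have h0 := congrFun (congrFun hmul 0) 0
      rwa [mul_diag E.2 E.2] at h0
    have hid2 : e2 * e2 = e2 := by
      have h0 := congrFun (congrFun hmul 1) 1
      rwa [mul_diag E.2 E.2] at h0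
    have hdiag := diag_isUnit hunit
    have hd1 := hdiag.1
    rw [coe_sub, Matrix.sub_apply] at hd1
    have he1 : e1 = 1 := by
      rcases idem01 hid1 with h0 | h0
      · exfalso; apply hna
        have hd1' : IsUnit (a - e1) := hd1
        rw [h0] at hd1'
        simpa using hd1'
      · exact h0
    have he2 : e2 = 0 := by
      rcases idem01 hid2 with h0 | h0
      · exact h0
      exfalso
      obtain ⟨u, hu⟩ := hb
      set A : T3 R := ⟨E3 a w b 0 1, E3_mem _ _ _ _ _⟩ with hAdef
      set D : T3 R := ⟨E3 0 0 (↑u⁻¹) 0 0, E3_mem _ _ _ _ _⟩ with hDdef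
      have hY : E * D * E = E * (E * D * E) * E := by
        rw [show E*(E*D*E)*E = (E*E)*D*(E*E) from by noncomm_ring, hEE]
      obtain ⟨z, hz, hz1, hz2⟩ := hcorner (E * D * E) hY
      have hEDE : ((E * D * E : T3 R) : Matrix (Fin 3) (Fin 3) R) 1 1 = ↑u⁻¹ := by
        rw [coe_mul, coe_mul, mul_diag (Subring.mul_mem _ E.2 D.2) E.2, mul_diag E.2 D.2]
        show e2 * ↑u⁻¹ * e2 = ↑u⁻¹
        rw [h0, one_mul, mul_one]
      have hEA : ((E * A : T3 R) : Matrix (Fin 3) (Fin 3) R) 1 1 = b := by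
        rw [coe_mul, mul_diag E.2 A.2]
        show e2 * b = b
        rw [h0, one_mul]
      have hW : ((E - E * D * E * (E * A) : T3 R) : Matrix (Fin 3) (Fin 3) R) 1 1 = 0 := by
        rw [coe_sub, Matrix.sub_apply, coe_mul, mul_diag (E*D*E).2 (E*A).2, hEDE, hEA,
          ← hu, u.inv_mul]
        show e2 - 1 = 0
        rw [h0, sub_self]
      have h11 := congrFun (congrFun (congrArg Subtype.val hz1) 1) 1
      rw [coe_mul, mul_diag (E - E*D*E*(E*A)).2 z.2, hW, zero_mul] at h11
      exact one_ne_zero (h11.trans h0).symm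
    -- extract the (1,0) commuting relation
    have hc : (E3 a w b 0 1 : Matrix (Fin 3) (Fin 3) R) * E
        = (E : Matrix (Fin 3) (Fin 3) R) * E3 a w b 0 1 := congrArg Subtype.val hcomm
    rw [hEval, E3_mul, E3_mul] at hc
    have h10 := congrFun (congrFun hc 1) 0
    simp only [E3_10] at h10
    rw [he1, he2] at h10
    simp only [mul_one, zero_mul, add_zero] at h10
    -- h10 : w + b * s = s * a
    refine ⟨-s, ?_⟩
    show b * (-s) - (-s) * a = w
    have hbs : b * s = s * a - w := by rw [← h10]; abel
    rw [mul_neg, neg_mul, hbs]; abel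
  · -- surjectivity of fun x => a*x - x*b
    intro w
    obtain ⟨E, hEE, hcomm, hunit, hcorner⟩ := h ⟨E3 1 0 a w b, E3_mem _ _ _ _ _⟩
    have hEval : (E : Matrix (Fin 3) (Fin 3) R)
        = E3 ((E : Matrix (Fin 3) (Fin 3) R) 0 0) ((E : Matrix (Fin 3) (Fin 3) R) 1 0)
            ((E : Matrix (Fin 3) (Fin 3) R) 1 1) ((E : Matrix (Fin 3) (Fin 3) R) 1 2)
            ((E : Matrix (Fin 3) (Fin 3) R) 2 2) := eq_E3 E.2
    set e2 := (E : Matrix (Fin 3) (Fin 3) R) 1 1 with he2def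
    set t := (E : Matrix (Fin 3) (Fin 3) R) 1 2 with htdef
    set e3 := (E : Matrix (Fin 3) (Fin 3) R) 2 2 with he3def
    have hmul : (E : Matrix (Fin 3) (Fin 3) R) * E = E :=
      (coe_mul E E) ▸ congrArg Subtype.val hEE
    have hid2 : e2 * e2 = e2 := by
      have h0 := congrFun (congrFun hmul 1) 1
      rwa [mul_diag E.2 E.2] at h0
    have hid3 : e3 * e3 = e3 := by
      have h0 := congrFun (congrFun hmul 2) 2
      rwa [mul_diag E.2 E.2] at h0
    have hdiag := diag_isUnit hunit
    have hd2 := hdiag.2.1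
    rw [coe_sub, Matrix.sub_apply] at hd2
    have he2 : e2 = 1 := by
      rcases idem01 hid2 with h0 | h0
      · exfalso; apply hna
        have hd2' : IsUnit (a - e2) := hd2
        rw [h0] at hd2'
        simpa using hd2'
      · exact h0
    have he3 : e3 = 0 := by
      rcases idem01 hid3 with h0 | h0
      · exact h0
      exfalso
      obtain ⟨u, hu⟩ := hb
      set A : T3 R := ⟨E3 1 0 a w b, E3_mem _ _ _ _ _⟩ with hAdef
      set D : T3 R := ⟨E3 0 0 0 0 (↑u⁻¹), E3_mem _ _ _ _ _⟩ with hDdef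
      have hY : E * D * E = E * (E * D * E) * E := by
        rw [show E*(E*D*E)*E = (E*E)*D*(E*E) from by noncomm_ring, hEE]
      obtain ⟨z, hz, hz1, hz2⟩ := hcorner (E * D * E) hY
      have hEDE : ((E * D * E : T3 R) : Matrix (Fin 3) (Fin 3) R) 2 2 = ↑u⁻¹ := by
        rw [coe_mul, coe_mul, mul_diag (Subring.mul_mem _ E.2 D.2) E.2, mul_diag E.2 D.2]
        show e3 * ↑u⁻¹ * e3 = ↑u⁻¹
        rw [h0, one_mul, mul_one]
      have hEA : ((E * A : T3 R) : Matrix (Fin 3) (Fin 3) R) 2 2 = b := by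
        rw [coe_mul, mul_diag E.2 A.2]
        show e3 * b = b
        rw [h0, one_mul]
      have hW : ((E - E * D * E * (E * A) : T3 R) : Matrix (Fin 3) (Fin 3) R) 2 2 = 0 := by
        rw [coe_sub, Matrix.sub_apply, coe_mul, mul_diag (E*D*E).2 (E*A).2, hEDE, hEA,
          ← hu, u.inv_mul]
        show e3 - 1 = 0
        rw [h0, sub_self]
      have h22 := congrFun (congrFun (congrArg Subtype.val hz1) 2) 2
      rw [coe_mul, mul_diag (E - E*D*E*(E*A)).2 z.2, hW, zero_mul] at h22
      exact one_ne_zero (h22.trans h0).symm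
    have hc : (E3 1 0 a w b : Matrix (Fin 3) (Fin 3) R) * E
        = (E : Matrix (Fin 3) (Fin 3) R) * E3 1 0 a w b := congrArg Subtype.val hcomm
    rw [hEval, E3_mul, E3_mul] at hc
    have h12 := congrFun (congrFun hc 1) 2
    simp only [E3_12] at h12
    rw [he2, he3] at h12
    simp only [mul_zero, add_zero, one_mul] at h12
    -- h12 : a * t = w + t * b
    refine ⟨t, ?_⟩
    show a * t - t * b = w
    rw [h12]; abel

end T3Aux

/-- For a local ring `R`, `𝒯₃(R)` is strongly rad clean iff `R` is bleached. -/
theorem T3_stronglyRadClean_iff_bleached {R : Type*} [Ring R] [IsLocalRing R] :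
    (∀ A : T3 R, StronglyRadCleanElem A) ↔ Bleached R :=
  ⟨T3Aux.forward, fun hbl A => T3Aux.backward hbl A⟩
end

section
/- Let R be a commutative local ring and A(x) ∈ M₂(R[[x]]). Then A(x) is quasipolar in M₂(R[[x]]) if and only if A(0) is quasipolar in M₂(R). -/
open Matrix IsLocalRing

namespace IsLocalRing

variable {S : Type*} [CommRing S] [IsLocalRing S]

theorem isUnit_add_of_mem_maximalIdeal {u a : S} (hu : IsUnit u) (ha : a ∈ maximalIdeal S) :
    IsUnit (u + a) := by
  rw [← notMem_maximalIdeal] at hu ⊢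
  exact fun h => hu (by simpa using sub_mem h ha)

theorem eq_zero_or_eq_one_of_isIdempotentElem {e : S} (he : IsIdempotentElem e) :
    e = 0 ∨ e = 1 := by
  rcases isUnit_or_isUnit_one_sub_self e with h | h
  · exact Or.inr ((IsIdempotentElem.iff_eq_one_of_isUnit h).mp he)
  · exact Or.inl (by simpa using (IsIdempotentElem.iff_eq_one_of_isUnit h).mp he.one_sub)

end IsLocalRing

theorem IsUnit.quasipolar {T : Type*} [Ring T] {a : T} (h : IsUnit a) : Quasipolar a :=
  ⟨0, by simp, by simp, by simpa using h, fun _ _ => by simp⟩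

theorem Quasinilpotent.quasipolar {T : Type*} [Ring T] {a : T} (h : Quasinilpotent a) :
    Quasipolar a :=
  ⟨1, mul_one 1, by simp, by simpa [add_comm] using h 1 (by simp), by simpa using h⟩

theorem Quasinilpotent.not_isUnit {T : Type*} [Ring T] [Nontrivial T] {q : T}
    (h : Quasinilpotent q) : ¬IsUnit q := by
  rintro ⟨u, rfl⟩
  simpa using h (-↑u⁻¹) (by simp)

namespace Matrix

section CommRing

variable {S : Type*} [CommRing S]

theorem mul_self_fin_two (A : Matrix (Fin 2) (Fin 2) S) :
    A * A = trace A • A - det A • 1 := by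
  ext i j
  fin_cases i <;> fin_cases j <;>
    simp [mul_apply, det_fin_two, trace_fin_two] <;> ring

theorem det_add_fin_two (M N : Matrix (Fin 2) (Fin 2) S) :
    det (M + N) = det M + det N + trace M * trace N - trace (M * N) := by
  simp only [det_fin_two, add_apply, trace_fin_two, mul_apply, Fin.sum_univ_two]
  ring

theorem det_one_add_fin_two (M : Matrix (Fin 2) (Fin 2) S) :
    det (1 + M) = 1 + trace M + det M := by
  rw [det_add_fin_two, one_mul, det_one, trace_one, Fintype.card_fin]
  ring

theorem det_one_add_smul_fin_two (c : S) (M : Matrix (Fin 2) (Fin 2) S) :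
    det (1 + c • M) = 1 + c * trace M + c ^ 2 * det M := by
  simp [det_one_add_fin_two]

theorem det_smul_one_sub_fin_two (c : S) (A : Matrix (Fin 2) (Fin 2) S) :
    det (c • 1 - A) = c ^ 2 - c * trace A + det A := by
  rw [sub_eq_add_neg, det_add_fin_two, det_smul, det_one, det_neg, trace_neg, trace_smul, trace_one,
    smul_mul, one_mul, trace_smul, trace_neg, Fintype.card_fin, smul_eq_mul, smul_eq_mul]
  ring

theorem mul_mul_self_fin_two (M X : Matrix (Fin 2) (Fin 2) S) :
    M * X * M = trace (M * X) • M - det M • adjugate X := by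
  ext i j
  fin_cases i <;> fin_cases j <;>
    simp [mul_apply, det_fin_two, trace_fin_two, adjugate_fin_two] <;> ring

theorem trace_mul_self_fin_two (M : Matrix (Fin 2) (Fin 2) S) :
    trace (M * M) = trace M ^ 2 - 2 * det M := by
  rw [mul_self_fin_two, trace_sub, trace_smul, trace_smul, trace_one, Fintype.card_fin, smul_eq_mul,
    smul_eq_mul]
  ring

variable {p : Matrix (Fin 2) (Fin 2) S}

theorem mul_eq_trace_smul_of_commute (hpp : IsIdempotentElem p) (hdet : det p = 0)
    {A : Matrix (Fin 2) (Fin 2) S} (hA : Commute p A) : A * p = trace (p * A) • p := by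
  calc A * p = p * A * p := by rw [hA.eq, mul_assoc, hpp.eq]
    _ = trace (p * A) • p := by rw [mul_mul_self_fin_two, hdet, zero_smul, sub_zero]

theorem det_one_sub_of_trace_eq_one (htr : trace p = 1) (hdet : det p = 0) : det (1 - p) = 0 := by
  rw [sub_eq_add_neg, det_one_add_fin_two, trace_neg, det_neg, htr, hdet]
  ring

theorem eq_smul_add_smul_one_sub_of_commute (hpp : IsIdempotentElem p) (htr : trace p = 1)
    (hdet : det p = 0) {A : Matrix (Fin 2) (Fin 2) S} (hA : Commute p A) :
    A = trace (p * A) • p + trace ((1 - p) * A) • (1 - p) := by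
  rw [← mul_eq_trace_smul_of_commute hpp hdet hA,
    ← mul_eq_trace_smul_of_commute hpp.one_sub (det_one_sub_of_trace_eq_one htr hdet)
      ((Commute.one_left A).sub_left hA), ← mul_add, add_sub_cancel, mul_one]

theorem trace_smul_add_smul_one_sub (htr : trace p = 1) (a b : S) :
    trace (a • p + b • (1 - p)) = a + b := by
  rw [trace_add, trace_smul, trace_smul, trace_sub, trace_one, Fintype.card_fin, htr, smul_eq_mul,
    smul_eq_mul]
  ring

theorem det_smul_add_smul_one_sub (hpp : IsIdempotentElem p) (htr : trace p = 1)
    (hdet : det p = 0) (a b : S) : det (a • p + b • (1 - p)) = a * b := by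
  rw [det_add_fin_two, smul_mul_smul_comm, hpp.mul_one_sub_self, smul_zero, trace_zero, det_smul,
    det_smul, det_one_sub_of_trace_eq_one htr hdet, hdet, trace_smul, trace_smul, trace_sub,
    trace_one, Fintype.card_fin, htr, smul_eq_mul, smul_eq_mul]
  ring

end CommRing

section IsLocalRing

variable {S : Type*} [CommRing S] [IsLocalRing S]

theorem eq_zero_or_eq_one_or_trace_eq_one_of_isIdempotentElem {p : Matrix (Fin 2) (Fin 2) S}
    (hp : IsIdempotentElem p) : p = 0 ∨ p = 1 ∨ (trace p = 1 ∧ det p = 0) := by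
  have hdet : IsIdempotentElem (det p) := by rw [IsIdempotentElem, ← det_mul, hp.eq]
  rcases eq_zero_or_eq_one_of_isIdempotentElem hdet with hdet | hdet
  · have hp_smul : p = trace p • p := by simpa [hdet, hp.eq] using mul_self_fin_two p
    have htr : IsIdempotentElem (trace p) := by
      simpa [IsIdempotentElem, eq_comm] using congrArg trace hp_smul
    rcases eq_zero_or_eq_one_of_isIdempotentElem htr with htr | htr
    · exact Or.inl (by rw [hp_smul, htr, zero_smul])
    · exact Or.inr (Or.inr ⟨htr, hdet⟩)
  · have hunit : IsUnit p := (isUnit_iff_isUnit_det p).mpr (hdet ▸ isUnit_one)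
    exact Or.inr (Or.inl ((IsIdempotentElem.iff_eq_one_of_isUnit hunit).mp hp))

theorem trace_mul_mem_maximalIdeal_of_commute {A y : Matrix (Fin 2) (Fin 2) S} (hy : Commute A y)
    (htr : trace A ∈ maximalIdeal S) (hdet : det A ∈ maximalIdeal S) :
    trace (A * y) ∈ maximalIdeal S := by
  have hsq : trace (A * y) ^ 2 =
      trace A * trace (A * (y * y)) - det A * trace (y * y) + 2 * (det A * det y) := by
    have : A * y * (A * y) = (trace A • A - det A • 1) * (y * y) := by
      rw [← mul_self_fin_two, hy.mul_mul_mul_comm]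
    have := congrArg trace this
    rw [trace_mul_self_fin_two, det_mul, sub_mul, smul_mul, smul_mul, one_mul, trace_sub,
      trace_smul, trace_smul, smul_eq_mul, smul_eq_mul] at this
    linear_combination this
  refine (maximalIdeal.isMaximal S).isPrime.mem_of_pow_mem 2 ?_
  rw [hsq]
  exact add_mem (sub_mem (Ideal.mul_mem_right _ _ htr) (Ideal.mul_mem_right _ _ hdet))
    (Ideal.mul_mem_left _ _ (Ideal.mul_mem_right _ _ hdet))

theorem quasinilpotent_iff_fin_two {A : Matrix (Fin 2) (Fin 2) S} :
    Quasinilpotent A ↔ trace A ∈ maximalIdeal S ∧ det A ∈ maximalIdeal S := by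
  constructor
  · intro h
    have hdet : det A ∈ maximalIdeal S := by
      rw [mem_maximalIdeal, mem_nonunits_iff, ← isUnit_iff_isUnit_det]
      exact h.not_isUnit
    refine ⟨?_, hdet⟩
    by_contra htr
    obtain ⟨t, ht⟩ := (notMem_maximalIdeal.mp htr).exists_left_inv
    have hunit := h ((-t) • 1) (by simp)
    rw [Matrix.mul_smul, mul_one, isUnit_iff_isUnit_det, det_one_add_smul_fin_two,
      show 1 + -t * trace A + (-t) ^ 2 * det A = t ^ 2 * det A by linear_combination -ht] at hunit
    exact notMem_maximalIdeal.mpr (isUnit_of_mul_isUnit_right hunit) hdet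
  · rintro ⟨htr, hdet⟩ y hy
    rw [isUnit_iff_isUnit_det, det_one_add_fin_two, add_assoc, det_mul]
    exact isUnit_add_of_mem_maximalIdeal isUnit_one (add_mem
      (trace_mul_mem_maximalIdeal_of_commute hy htr hdet) (Ideal.mul_mem_right _ _ hdet))

theorem isUnit_add_and_quasinilpotent_mul_iff {p : Matrix (Fin 2) (Fin 2) S}
    (hpp : IsIdempotentElem p) (htr : trace p = 1) (hdet : det p = 0) (a b : S) :
    (IsUnit (a • p + b • (1 - p) + p) ∧ Quasinilpotent ((a • p + b • (1 - p)) * p)) ↔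
      a ∈ maximalIdeal S ∧ IsUnit b := by
  have hsum : a • p + b • (1 - p) + p = (a + 1) • p + b • (1 - p) := by module
  have hmul : (a • p + b • (1 - p)) * p = a • p := by
    rw [add_mul, smul_mul, smul_mul, hpp.eq, hpp.one_sub_mul_self, smul_zero, add_zero]
  rw [hsum, hmul, isUnit_iff_isUnit_det, det_smul_add_smul_one_sub hpp htr hdet,
    quasinilpotent_iff_fin_two, trace_smul, det_smul, htr, hdet, IsUnit.mul_iff]
  simp only [smul_eq_mul, mul_one, mul_zero, zero_mem, and_true]
  refine ⟨fun h => ⟨h.2, h.1.2⟩, fun h => ⟨⟨?_, h.2⟩, h.1⟩⟩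
  simpa [add_comm] using isUnit_add_of_mem_maximalIdeal isUnit_one h.1

end IsLocalRing

end Matrix

section Criterion

variable {S : Type*} [CommRing S] [IsLocalRing S]

/-- The third alternative says that `χ_A(t) = (t - α) (t - β)` with `α ∈ J(S)` and `β ∈ U(S)`. -/
def QuasipolarCriterion (A : Matrix (Fin 2) (Fin 2) S) : Prop :=
  IsUnit A ∨ (trace A ∈ maximalIdeal S ∧ det A ∈ maximalIdeal S) ∨
    ∃ α β : S, α ∈ maximalIdeal S ∧ IsUnit β ∧ α + β = trace A ∧ α * β = det A

/-- The idempotent is the spectral projection `(β - α)⁻¹ (β - A)` onto the `α`-eigenspace. -/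
theorem quasipolar_of_trace_eq_add_of_det_eq_mul {A : Matrix (Fin 2) (Fin 2) S} {α β : S}
    (hα : α ∈ maximalIdeal S) (hβ : IsUnit β) (hsum : α + β = trace A) (hprod : α * β = det A) :
    Quasipolar A := by
  obtain ⟨w, hw⟩ := (isUnit_add_of_mem_maximalIdeal hβ (neg_mem hα)).exists_left_inv
  set p : Matrix (Fin 2) (Fin 2) S := w • (β • 1 - A) with hp
  have htr : trace p = 1 := by
    rw [hp, trace_smul, trace_sub, trace_smul, trace_one, Fintype.card_fin, ← hsum, smul_eq_mul,
      smul_eq_mul]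
    linear_combination hw
  have hdet : det p = 0 := by
    rw [hp, det_smul, Fintype.card_fin, det_smul_one_sub_fin_two, ← hsum, ← hprod]
    ring
  have hpp : IsIdempotentElem p := by
    rw [IsIdempotentElem, mul_self_fin_two, htr, hdet, one_smul, zero_smul, sub_zero]
  have hA : α • p + β • (1 - p) = A := by
    calc α • p + β • (1 - p) = β • 1 + ((α - β) * w) • (β • 1 - A) := by rw [hp]; module
      _ = A := by rw [show (α - β) * w = -1 by linear_combination -hw]; module
  refine ⟨p, hpp, fun y hy => ?_,
    hA ▸ (isUnit_add_and_quasinilpotent_mul_iff hpp htr hdet α β).mpr ⟨hα, hβ⟩⟩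
  simp [p, sub_mul, mul_sub, hy]

theorem QuasipolarCriterion.quasipolar {A : Matrix (Fin 2) (Fin 2) S}
    (h : QuasipolarCriterion A) : Quasipolar A := by
  rcases h with hA | ⟨htr, hdet⟩ | ⟨α, β, hα, hβ, hsum, hprod⟩
  · exact hA.quasipolar
  · exact (quasinilpotent_iff_fin_two.mpr ⟨htr, hdet⟩).quasipolar
  · exact quasipolar_of_trace_eq_add_of_det_eq_mul hα hβ hsum hprod

theorem Quasipolar.quasipolarCriterion {A : Matrix (Fin 2) (Fin 2) S} (h : Quasipolar A) :
    QuasipolarCriterion A := by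
  obtain ⟨p, hpp, hcomm, hunit, hqn⟩ := h
  rcases eq_zero_or_eq_one_or_trace_eq_one_of_isIdempotentElem hpp with
    rfl | rfl | ⟨htr, hdet⟩
  · exact Or.inl (by simpa using hunit)
  · exact Or.inr (Or.inl (quasinilpotent_iff_fin_two.mp (by simpa using hqn)))
  · obtain ⟨α, β, rfl⟩ : ∃ α β : S, A = α • p + β • (1 - p) :=
      ⟨_, _, eq_smul_add_smul_one_sub_of_commute hpp htr hdet (hcomm A rfl)⟩
    obtain ⟨hα, hβ⟩ :=
      (isUnit_add_and_quasinilpotent_mul_iff hpp htr hdet α β).mp ⟨hunit, hqn⟩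
    exact Or.inr (Or.inr ⟨α, β, hα, hβ, (trace_smul_add_smul_one_sub htr α β).symm,
      (det_smul_add_smul_one_sub hpp htr hdet α β).symm⟩)

theorem quasipolar_iff_quasipolarCriterion {A : Matrix (Fin 2) (Fin 2) S} :
    Quasipolar A ↔ QuasipolarCriterion A :=
  ⟨Quasipolar.quasipolarCriterion, QuasipolarCriterion.quasipolar⟩

end Criterion

theorem QuasipolarCriterion.map {S T : Type*} [CommRing S] [IsLocalRing S] [CommRing T]
    [IsLocalRing T] (φ : S →+* T) [IsLocalHom φ] {A : Matrix (Fin 2) (Fin 2) S}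
    (h : QuasipolarCriterion A) : QuasipolarCriterion (A.map φ) := by
  have htr : trace (A.map φ) = φ (trace A) := (AddMonoidHom.map_trace φ A).symm
  have hdet : det (A.map φ) = φ (det A) := (RingHom.map_det φ A).symm
  rcases h with hA | ⟨htrA, hdetA⟩ | ⟨α, β, hα, hβ, hsum, hprod⟩
  · exact Or.inl (hA.map φ.mapMatrix)
  · exact Or.inr (Or.inl ⟨htr ▸ map_nonunit φ _ htrA, hdet ▸ map_nonunit φ _ hdetA⟩)
  · exact Or.inr (Or.inr ⟨φ α, φ β, map_nonunit φ _ hα, hβ.map φ,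
      by rw [htr, ← hsum, map_add], by rw [hdet, ← hprod, map_mul]⟩)

namespace PowerSeries

open Polynomial in
theorem exists_isRoot_constantCoeff_eq {R : Type*} [CommRing R] {f : R⟦X⟧[X]} (hf : f.Monic)
    {b : R} (hroot : (f.map constantCoeff).IsRoot b)
    (hsimple : IsUnit ((f.map constantCoeff).derivative.eval b)) :
    ∃ β : R⟦X⟧, f.IsRoot β ∧ constantCoeff β = b := by
  have hmem : ∀ g : R⟦X⟧, g ∈ Ideal.span {X} ↔ constantCoeff g = 0 := fun g => by
    rw [Ideal.mem_span_singleton, X_dvd_iff]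
  obtain ⟨β, hβ, hsub⟩ := HenselianRing.is_henselian (I := Ideal.span {X}) f hf (C b)
    (by rw [hmem, ← eval_map_apply, constantCoeff_C, hroot.eq_zero])
    ((isUnit_iff_constantCoeff.mpr (by
      rwa [← eval_map_apply, constantCoeff_C, ← derivative_map])).map _)
  exact ⟨β, hβ, by simpa [sub_eq_zero] using (hmem _).mp hsub⟩

theorem exists_mul_self_sub_mul_add_eq_zero {R : Type*} [CommRing R] (T D : R⟦X⟧) {a b : R}
    (hab : IsUnit (b - a)) (hsum : a + b = constantCoeff T) (hprod : a * b = constantCoeff D) :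
    ∃ β : R⟦X⟧, β * β - T * β + D = 0 ∧ constantCoeff β = b := by
  have hf : (Polynomial.X ^ 2 - Polynomial.C T * Polynomial.X + Polynomial.C D).Monic := by
    monicity!
  set f := Polynomial.X ^ 2 - Polynomial.C T * Polynomial.X + Polynomial.C D
  have hfac :
      f.map constantCoeff = (Polynomial.X - Polynomial.C a) * (Polynomial.X - Polynomial.C b) := by
    simp only [f, Polynomial.map_add, Polynomial.map_sub, Polynomial.map_mul, Polynomial.map_pow,
      Polynomial.map_X, Polynomial.map_C, ← hsum, ← hprod, map_add, map_mul]
    ring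
  obtain ⟨β, hβ, hβb⟩ := exists_isRoot_constantCoeff_eq hf (b := b) (by simp [hfac])
    (by simpa [hfac, Polynomial.derivative_mul] using hab)
  exact ⟨β, by simpa [f, sq] using hβ, hβb⟩

theorem mem_maximalIdeal_iff_constantCoeff {R : Type*} [CommRing R] [IsLocalRing R] {g : R⟦X⟧} :
    g ∈ maximalIdeal R⟦X⟧ ↔ constantCoeff g ∈ maximalIdeal R := by
  rw [← not_iff_not, notMem_maximalIdeal, notMem_maximalIdeal, isUnit_iff_constantCoeff]

instance isLocalHom_constantCoeff {R : Type*} [CommRing R] :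
    IsLocalHom (constantCoeff (R := R)) :=
  ⟨fun _ => isUnit_iff_constantCoeff.mpr⟩

end PowerSeries

open PowerSeries in
theorem QuasipolarCriterion.of_map_constantCoeff {R : Type*} [CommRing R] [IsLocalRing R]
    {A : Matrix (Fin 2) (Fin 2) R⟦X⟧} (h : QuasipolarCriterion (A.map constantCoeff)) :
    QuasipolarCriterion A := by
  have htrA : trace (A.map constantCoeff) = constantCoeff (trace A) :=
    (AddMonoidHom.map_trace _ A).symm
  have hdetA : det (A.map constantCoeff) = constantCoeff (det A) := (RingHom.map_det _ A).symm
  rw [QuasipolarCriterion, isUnit_iff_isUnit_det, htrA, hdetA] at h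
  rcases h with hA | ⟨htr, hdet⟩ | ⟨a, b, ha, hb, hsum, hprod⟩
  · exact Or.inl ((isUnit_iff_isUnit_det A).mpr (isUnit_iff_constantCoeff.mpr hA))
  · exact Or.inr (Or.inl ⟨mem_maximalIdeal_iff_constantCoeff.mpr htr,
      mem_maximalIdeal_iff_constantCoeff.mpr hdet⟩)
  · obtain ⟨β, hβ, hβb⟩ := exists_mul_self_sub_mul_add_eq_zero (trace A) (det A)
      (sub_eq_add_neg b a ▸ isUnit_add_of_mem_maximalIdeal hb (neg_mem ha)) hsum hprod
    refine Or.inr (Or.inr ⟨trace A - β, β, ?_, ?_, by ring, by linear_combination -hβ⟩)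
    · rw [mem_maximalIdeal_iff_constantCoeff, map_sub, hβb, ← hsum, add_sub_cancel_right]
      exact ha
    · rwa [isUnit_iff_constantCoeff, hβb]

/-- For a commutative local ring `R`, `A(x) ∈ M₂(R[[x]])` is quasipolar iff
`A(0) ∈ M₂(R)` is quasipolar. -/
theorem quasipolar_powerSeries_matrix {R : Type*} [CommRing R] [IsLocalRing R]
    (A : Matrix (Fin 2) (Fin 2) (PowerSeries R)) :
    Quasipolar A ↔ Quasipolar (A.map (PowerSeries.constantCoeff (R := R))) := by
  rw [quasipolar_iff_quasipolarCriterion, quasipolar_iff_quasipolarCriterion]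
  exact ⟨QuasipolarCriterion.map _, QuasipolarCriterion.of_map_constantCoeff⟩
end

section
/- A local ring R is uniquely bleached if and only if the power series ring R[[x]] is uniquely bleached. -/
open PowerSeries

section Sylvester

variable {S T : Type*} [Ring S] [Ring T]

def sylvester (a b : S) : S →+ S :=
  AddMonoidHom.mk' (fun x => a * x - x * b) fun x y => by noncomm_ring

@[simp]
theorem sylvester_apply (a b x : S) : sylvester a b x = a * x - x * b := rfl

theorem map_sylvester (φ : S →+* T) (a b x : S) :
    φ (sylvester a b x) = sylvester (φ a) (φ b) (φ x) := by
  simp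

theorem sylvester_mul_of_commute {a c : S} (h : Commute a c) (b x : S) :
    sylvester a b (c * x) = c * sylvester a b x := by
  simp only [sylvester_apply, mul_sub, ← mul_assoc, h.eq]

end Sylvester

theorem Ideal.mem_jacobson_bot_iff_forall_exists_mul_eq_one {R : Type*} [Ring R] {x : R} :
    x ∈ (⊥ : Ideal R).jacobson ↔ ∀ y, ∃ z, z * (y * x + 1) = 1 := by
  simp only [Ideal.mem_jacobson_iff, Ideal.mem_bot, sub_eq_zero, mul_add, mul_one, mul_assoc]

namespace PowerSeries

variable {R : Type*} [Ring R]

theorem mem_jacobson_bot_iff {f : R⟦X⟧} :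
    f ∈ (⊥ : Ideal R⟦X⟧).jacobson ↔ constantCoeff f ∈ (⊥ : Ideal R).jacobson := by
  simp only [Ideal.mem_jacobson_bot_iff_forall_exists_mul_eq_one]
  constructor
  · intro h y
    obtain ⟨z, hz⟩ := h (C y)
    exact ⟨constantCoeff z, by simpa using congrArg constantCoeff hz⟩
  · intro h y
    obtain ⟨w, hw⟩ := h (constantCoeff y)
    obtain ⟨u, hu⟩ : IsUnit (C w * (y * f + 1)) := isUnit_iff_constantCoeff.2 (by simp [hw])
    exact ⟨↑u⁻¹ * C w, by rw [mul_assoc, ← hu, u.inv_mul]⟩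

theorem eq_zero_of_forall_X_pow_dvd {f : R⟦X⟧} (h : ∀ k, (X : R⟦X⟧) ^ k ∣ f) : f = 0 := by
  ext n
  exact X_pow_dvd_iff.1 (h (n + 1)) n n.lt_succ_self

theorem exists_forall_X_pow_dvd_sub {A : ℕ → R⟦X⟧} (hA : ∀ k, (X : R⟦X⟧) ^ k ∣ A (k + 1) - A k) :
    ∃ f, ∀ k, (X : R⟦X⟧) ^ k ∣ f - A k := by
  have hcauchy : ∀ k j, k ≤ j → (X : R⟦X⟧) ^ k ∣ A j - A k := by
    intro k j hkj
    induction j, hkj using Nat.le_induction with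
    | base => simp
    | succ j hkj ih =>
      rw [← sub_add_sub_cancel]
      exact dvd_add ((pow_dvd_pow X hkj).trans (hA j)) ih
  refine ⟨mk fun n => coeff n (A (n + 1)), fun k => X_pow_dvd_iff.2 fun m hm => ?_⟩
  have := X_pow_dvd_iff.1 (hcauchy (m + 1) k hm) m m.lt_succ_self
  rw [map_sub, sub_eq_zero] at this
  rw [map_sub, coeff_mk, this, sub_self]

variable {F G : R⟦X⟧}

theorem sylvester_X_pow_mul (k : ℕ) (H : R⟦X⟧) :
    sylvester F G (X ^ k * H) = X ^ k * sylvester F G H :=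
  sylvester_mul_of_commute (commute_X_pow F k) G H

theorem X_pow_dvd_of_X_pow_dvd_sylvester
    (hinj : Function.Injective (sylvester (constantCoeff F) (constantCoeff G)))
    {H : R⟦X⟧} {k : ℕ} (h : X ^ k ∣ sylvester F G H) : X ^ k ∣ H := by
  induction k with
  | zero => exact one_dvd H
  | succ k ih =>
    obtain ⟨E, rfl⟩ := ih ((pow_dvd_pow X k.le_succ).trans h)
    rw [sylvester_X_pow_mul] at h
    have hE : constantCoeff (sylvester F G E) = 0 := by
      simpa [coeff_X_pow_mul'] using X_pow_dvd_iff.1 h k k.lt_succ_self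
    obtain ⟨E', rfl⟩ := X_dvd_iff.2 (hinj (by simpa using hE) : constantCoeff E = 0)
    rw [pow_succ, ← mul_assoc]
    exact dvd_mul_right _ _

theorem exists_X_pow_dvd_sylvester_sub
    (hsurj : Function.Surjective (sylvester (constantCoeff F) (constantCoeff G)))
    (K : R⟦X⟧) (k : ℕ) : ∃ H, X ^ k ∣ sylvester F G H - K := by
  induction k with
  | zero => exact ⟨0, one_dvd _⟩
  | succ k ih =>
    obtain ⟨H, E, hE⟩ := ih
    obtain ⟨c, hc⟩ := hsurj (constantCoeff E)
    refine ⟨H - X ^ k * C c, ?_⟩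
    have hX : X ∣ E - sylvester F G (C c) := by
      rw [X_dvd_iff, map_sub, map_sylvester, constantCoeff_C, hc, sub_self]
    rw [map_sub, sub_right_comm, hE, sylvester_X_pow_mul, ← mul_sub, pow_succ]
    exact mul_dvd_mul_left _ hX

theorem injective_sylvester
    (hinj : Function.Injective (sylvester (constantCoeff F) (constantCoeff G))) :
    Function.Injective (sylvester F G) := by
  refine (injective_iff_map_eq_zero _).2 fun H hH => eq_zero_of_forall_X_pow_dvd fun k => ?_
  exact X_pow_dvd_of_X_pow_dvd_sylvester hinj (hH ▸ dvd_zero _)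

theorem surjective_sylvester
    (hbij : Function.Bijective (sylvester (constantCoeff F) (constantCoeff G))) :
    Function.Surjective (sylvester F G) := by
  intro K
  choose A hA using exists_X_pow_dvd_sylvester_sub hbij.2 K
  have hstep : ∀ k, X ^ k ∣ A (k + 1) - A k := fun k => by
    refine X_pow_dvd_of_X_pow_dvd_sylvester hbij.1 ?_
    rw [map_sub, ← sub_sub_sub_cancel_right _ _ K]
    exact dvd_sub ((pow_dvd_pow X k.le_succ).trans (hA (k + 1))) (hA k)
  obtain ⟨H, hH⟩ := exists_forall_X_pow_dvd_sub hstep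
  refine ⟨H, sub_eq_zero.1 (eq_zero_of_forall_X_pow_dvd fun k => ?_)⟩
  obtain ⟨E, hE⟩ := hH k
  rw [← sub_add_sub_cancel _ (sylvester F G (A k)), ← map_sub, hE, sylvester_X_pow_mul]
  exact dvd_add (dvd_mul_right _ _) (hA k)

theorem bijective_sylvester_iff :
    Function.Bijective (sylvester F G) ↔
      Function.Bijective (sylvester (constantCoeff F) (constantCoeff G)) := by
  refine ⟨fun ⟨hinj, hsurj⟩ => ⟨(injective_iff_map_eq_zero _).2 fun c hc => ?_, fun r => ?_⟩,
    fun h => ⟨injective_sylvester h.1, surjective_sylvester h⟩⟩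
  · -- If `T₀ c = 0`, surjectivity writes `T (C c) = X * T D`; injectivity gives `C c = X * D`.
    obtain ⟨E, hE⟩ : X ∣ sylvester F G (C c) := by
      rw [X_dvd_iff, map_sylvester, constantCoeff_C, hc]
    obtain ⟨D, rfl⟩ := hsurj E
    have hCD : C c = X * D := by
      rw [← sub_eq_zero, ← hinj.eq_iff, map_sub, sylvester_mul_of_commute (commute_X F), ← hE,
        sub_self, map_zero]
    simpa using congrArg constantCoeff hCD
  · obtain ⟨H, hH⟩ := hsurj (C r)
    exact ⟨constantCoeff H, by simpa [map_sylvester] using congrArg constantCoeff hH⟩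

end PowerSeries

theorem uniquelyBleached_iff_powerSeries_general {R : Type*} [Ring R] :
    UniquelyBleached R ↔ UniquelyBleached (PowerSeries R) := by
  constructor
  · intro hR f g hf hg
    obtain ⟨h₁, h₂⟩ := hR _ _ (mem_jacobson_bot_iff.1 hf) (hg.map constantCoeff)
    exact ⟨bijective_sylvester_iff.2 h₁, bijective_sylvester_iff.2 h₂⟩
  · intro hS a b ha hb
    have haC : C a ∈ (⊥ : Ideal R⟦X⟧).jacobson := mem_jacobson_bot_iff.2 (by simpa using ha)
    obtain ⟨h₁, h₂⟩ := hS _ _ haC (hb.map C)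
    have h₁' := bijective_sylvester_iff.1 h₁
    have h₂' := bijective_sylvester_iff.1 h₂
    rw [constantCoeff_C, constantCoeff_C] at h₁' h₂'
    exact ⟨h₁', h₂'⟩

/-- A local ring `R` is uniquely bleached iff the power series ring `R[[x]]` is uniquely
bleached. -/
theorem uniquelyBleached_iff_powerSeries {R : Type*} [Ring R] [IsLocalRing R] :
    UniquelyBleached R ↔ UniquelyBleached (PowerSeries R) :=
  uniquelyBleached_iff_powerSeries_general
end

section
/- If R is a local ring that is uniquely bleached, then for every j ∈ J(R[[x]]) and u ∈ U(R[[x]]), the additive map f ↦ jf − fu on R[[x]] is injective. -/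
theorem Ideal.map_mem_jacobson_bot_of_surjective {R S : Type*} [Ring R] [Ring S] {f : R →+* S}
    (hf : Function.Surjective f) {x : R} (hx : x ∈ (⊥ : Ideal R).jacobson) :
    f x ∈ (⊥ : Ideal S).jacobson := by
  have hx' : x ∈ (Ideal.comap f ⊥).jacobson := Ideal.jacobson_mono bot_le hx
  rwa [← Ideal.comap_jacobson_of_surjective hf] at hx'

namespace PowerSeries

variable {R : Type*} [Ring R]

/-- Dividing `d` by the largest power of `X` it admits makes its constant coefficient nonzero,
and `j * d = d * u` survives the division because `X` is central and not a zero divisor. -/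
theorem eq_zero_of_mul_eq_mul_of_injective_constantCoeff {j u d : R⟦X⟧}
    (hinj : Function.Injective fun x : R => constantCoeff j * x - x * constantCoeff u)
    (hd : j * d = d * u) : d = 0 := by
  by_contra hd0
  have hn := coeff_order hd0
  obtain ⟨e, hde⟩ := X_pow_order_dvd (φ := d)
  set n := d.order.toNat
  have he : j * e = e * u := by
    apply X_pow_mul_cancel (k := n)
    rw [← mul_assoc, ← (commute_X_pow j n).eq, mul_assoc, ← hde, hd, hde, mul_assoc]
  have he0 : constantCoeff e = 0 := hinj <| by
    simp only [← map_mul, he, sub_self, zero_mul, mul_zero]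
  apply hn
  calc coeff n d = coeff (0 + n) (X ^ n * e) := by rw [zero_add, ← hde]
    _ = coeff 0 e := coeff_X_pow_mul e n 0
    _ = 0 := by rw [coeff_zero_eq_constantCoeff_apply, he0]

theorem injective_mul_sub_mul_of_injective_constantCoeff {j u : R⟦X⟧}
    (hinj : Function.Injective fun x : R => constantCoeff j * x - x * constantCoeff u) :
    Function.Injective fun f : R⟦X⟧ => j * f - f * u := by
  intro f g hfg
  rw [← sub_eq_zero]
  refine eq_zero_of_mul_eq_mul_of_injective_constantCoeff hinj ?_
  rw [mul_sub, sub_mul, sub_eq_sub_iff_sub_eq_sub]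
  exact hfg

end PowerSeries

theorem powerSeries_sub_injective_general {R : Type*} [Ring R]
    (h : UniquelyBleached R) (j u : PowerSeries R)
    (hj : j ∈ (⊥ : Ideal (PowerSeries R)).jacobson) (hu : IsUnit u) :
    Function.Injective (fun f : PowerSeries R => j * f - f * u) := by
  have ha := Ideal.map_mem_jacobson_bot_of_surjective PowerSeries.constantCoeff_surj hj
  have hb := PowerSeries.isUnit_constantCoeff u hu
  exact PowerSeries.injective_mul_sub_mul_of_injective_constantCoeff (h _ _ ha hb).2.1

/-- If a local ring `R` is uniquely bleached, then for every `j ∈ J(R[[x]])` and every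
unit `u` of `R[[x]]`, the map `f ↦ j*f - f*u` on `R[[x]]` is injective. -/
theorem powerSeries_sub_injective {R : Type*} [Ring R] [IsLocalRing R]
    (h : UniquelyBleached R) (j u : PowerSeries R)
    (hj : j ∈ (⊥ : Ideal (PowerSeries R)).jacobson) (hu : IsUnit u) :
    Function.Injective (fun f : PowerSeries R => j * f - f * u) :=
  powerSeries_sub_injective_general h j u hj hu
end
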